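/- arXiv:1304.7384 — 5 statements merged into one kernel-verified Lean document; each statement's English description precedes it below -/
import Mathlib

section
/- Let X be a real Banach-Lie algebra whose norm satisfies ‖[u,v]‖ ≤ ‖u‖·‖v‖. Let α_n be the Maclaurin coefficients of the holomorphic function w ↦ w/(1 − e^w) on {|w| < 2π} (so α_n = −B_n/n!, B_n the Bernoulli numbers). Then for every z ∈ X with ‖z‖ < 2π, the series ∑_{n≥0} α_n (ad z)^n converges in the Banach algebra of continuous linear endomorphisms of X, and the continuous linear operator (1 − exp(ad z))/(ad z) := −∑_{n≥0} (ad z)^n/(n+1)! is invertible, with two-sided inverse ∑_{n≥0} α_n (ad z)^n. In particular, the open ball of radius 2π centered at 0 is contained in the set A = {z ∈ X : (1 − exp(ad z))/(ad z) is invertible}. -/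
/-!
Write `B(w) = w / (eʷ - 1)` and `E(w) = (eʷ - 1) / w`, so that `B · E = 1` as formal power
series. Euler's formula for `ζ(2k)` bounds `|Bₙ / n!|` by `4 / (2π)ⁿ`, so both series converge
absolutely at any element of norm `< 2π` of a Banach algebra, and there evaluation is
multiplicative by the Cauchy product formula. Since `‖ad z‖ ≤ ‖z‖`, evaluating `(-B) · (-E) = 1`
and `(-E) · (-B) = 1` at `ad z` gives the two inverse identities.
-/

open Real Finset PowerSeries Nat

theorem abs_bernoulli_two_mul_div_factorial_le {k : ℕ} (hk : k ≠ 0) :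
    |(bernoulli (2 * k) : ℝ) / (2 * k)!| ≤ 4 / (2 * π) ^ (2 * k) := by
  have hzeta := hasSum_zeta_nat hk
  have hterm (n : ℕ) : 1 / (n : ℝ) ^ (2 * k) ≤ 1 / (n : ℝ) ^ 2 := by
    rcases n.eq_zero_or_pos with rfl | hn
    · simp [hk]
    · exact one_div_le_one_div_of_le (by positivity) (pow_le_pow_right₀ (mod_cast hn) (by omega))
  have hle := hasSum_le hterm hzeta hasSum_zeta_two
  have hnonneg := hzeta.nonneg fun n => by positivity
  have h2k : (2 * π) ^ (2 * k) = 2 * (2 ^ (2 * k - 1) * π ^ (2 * k)) := by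
    rw [mul_pow, ← mul_assoc, ← pow_succ' (2 : ℝ), Nat.sub_add_cancel (by omega)]
  rw [le_div_iff₀ (by positivity), h2k]
  calc |(bernoulli (2 * k) : ℝ) / (2 * k)!| * (2 * (2 ^ (2 * k - 1) * π ^ (2 * k)))
      = 2 * |(-1 : ℝ) ^ (k + 1) * 2 ^ (2 * k - 1) * π ^ (2 * k) * bernoulli (2 * k) / (2 * k)!| := by
        simp only [mul_div_assoc, abs_mul, abs_pow, abs_neg, abs_one, one_pow, one_mul, abs_two,
          abs_of_pos pi_pos]
        ring
    _ ≤ 2 * (π ^ 2 / 6) := by rw [abs_of_nonneg hnonneg]; gcongr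
    _ ≤ 4 := by nlinarith [pi_lt_d2, pi_pos]

theorem abs_bernoulli_div_factorial_le (n : ℕ) : |(bernoulli n : ℝ) / n !| ≤ 4 / (2 * π) ^ n := by
  rcases n.even_or_odd with ⟨k, rfl⟩ | hodd
  · rcases eq_or_ne k 0 with rfl | hk
    · norm_num
    · rw [← two_mul]; exact abs_bernoulli_two_mul_div_factorial_le hk
  · rcases eq_or_ne n 1 with rfl | hn
    · rw [le_div_iff₀ (by positivity)]
      norm_num
      linarith [pi_le_four]
    · rw [bernoulli_eq_bernoulli'_of_ne_one hn, bernoulli'_eq_zero_of_odd hodd (by have := hodd.pos; omega)]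
      simp only [Rat.cast_zero, zero_div, abs_zero]
      positivity

section
variable (A : Type*) [CommRing A] [Algebra ℚ A]

noncomputable def expSubOneDivX : PowerSeries A :=
  mk fun n => algebraMap ℚ A (1 / (n + 1)!)

variable {A}

theorem X_mul_expSubOneDivX : X * expSubOneDivX A = exp A - 1 := by
  ext (_ | n)
  · simp
  · simp [coeff_succ_X_mul, expSubOneDivX, coeff_exp]

theorem bernoulliPowerSeries_mul_expSubOneDivX :
    bernoulliPowerSeries A * expSubOneDivX A = 1 :=
  X_mul_cancel <| by
    rw [mul_left_comm, X_mul_expSubOneDivX, bernoulliPowerSeries_mul_exp_sub_one, mul_one]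
end

theorem summable_abs_coeff_bernoulliPowerSeries_mul_pow {r : ℝ} (hr₀ : 0 ≤ r) (hr : r < 2 * π) :
    Summable fun n => |coeff n (bernoulliPowerSeries ℝ)| * r ^ n := by
  have hq : r / (2 * π) < 1 := (div_lt_one (by positivity)).mpr hr
  refine .of_nonneg_of_le (fun n => by positivity) (fun n => ?_)
    ((summable_geometric_of_lt_one (by positivity) hq).mul_left 4)
  calc |coeff n (bernoulliPowerSeries ℝ)| * r ^ n = |(bernoulli n : ℝ) / n !| * r ^ n := by
        simp [bernoulliPowerSeries]
    _ ≤ 4 / (2 * π) ^ n * r ^ n := by gcongr; exact abs_bernoulli_div_factorial_le n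
    _ = 4 * (r / (2 * π)) ^ n := by rw [div_pow]; ring

theorem summable_abs_coeff_expSubOneDivX_mul_pow (r : ℝ) :
    Summable fun n => |coeff n (expSubOneDivX ℝ)| * r ^ n := by
  refine .of_norm_bounded (Real.summable_pow_div_factorial |r|) fun n => ?_
  have hfact : (n ! : ℝ) ≤ (n + 1)! := mod_cast factorial_le n.le_succ
  rw [norm_mul, norm_abs_eq_norm, norm_pow, Real.norm_eq_abs, Real.norm_eq_abs, div_eq_inv_mul]
  gcongr
  simp only [expSubOneDivX, coeff_mk, one_div, map_inv₀, map_natCast, abs_inv, Nat.abs_cast]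
  gcongr

section
variable {𝕜 A : Type*} [NormedField 𝕜] [NormedRing A] [NormedAlgebra 𝕜 A]

theorem summable_norm_smul_pow {c : ℕ → 𝕜} {a : A} (h : Summable fun n => ‖c n‖ * ‖a‖ ^ n) :
    Summable fun n => ‖c n • a ^ n‖ := by
  refine .of_norm_bounded_eventually_nat h ?_
  filter_upwards [Filter.eventually_ne_atTop 0] with n hn
  rw [norm_norm, norm_smul]
  gcongr
  exact norm_pow_le' a (Nat.pos_of_ne_zero hn)

variable [CompleteSpace A]

theorem tsum_coeff_mul_smul_pow {p q : PowerSeries 𝕜} {a : A}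
    (hp : Summable fun n => ‖coeff n p • a ^ n‖) (hq : Summable fun n => ‖coeff n q • a ^ n‖) :
    ∑' n, coeff n (p * q) • a ^ n = (∑' n, coeff n p • a ^ n) * ∑' n, coeff n q • a ^ n := by
  rw [tsum_mul_tsum_eq_tsum_sum_antidiagonal_of_summable_norm hp hq]
  refine tsum_congr fun n => ?_
  rw [coeff_mul, sum_smul]
  refine sum_congr rfl fun kl hkl => ?_
  rw [smul_mul_smul_comm, ← pow_add, mem_antidiagonal.mp hkl]

theorem tsum_coeff_smul_pow_mul_eq_one {p q : PowerSeries 𝕜} {a : A}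
    (hp : Summable fun n => ‖coeff n p • a ^ n‖) (hq : Summable fun n => ‖coeff n q • a ^ n‖)
    (hpq : p * q = 1) :
    (∑' n, coeff n p • a ^ n) * ∑' n, coeff n q • a ^ n = 1 := by
  rw [← tsum_coeff_mul_smul_pow hp hq, hpq, tsum_eq_single 0 fun n hn => by simp [coeff_one, hn]]
  simp
end

-- `LieRing X` carries an additive group structure of its own; demoting it makes the statement
-- use the one of `NormedAddCommGroup X`.
attribute [local instance 10] LieRing.toAddCommGroup

theorem ball_two_pi_subset_invertibility_domain_general
    {X : Type*} [NormedAddCommGroup X] [NormedSpace ℝ X] [CompleteSpace X]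
    [LieRing X]
    (hsub : ∀ u v : X, ‖⁅u, v⁆‖ ≤ ‖u‖ * ‖v‖)
    (adL : X → X →L[ℝ] X) (hadL : ∀ z c : X, adL z c = ⁅z, c⁆)
    (α : ℕ → ℝ) (hα : ∀ n : ℕ, α n = -((bernoulli n : ℝ) / (n.factorial : ℝ)))
    (z : X) (hz : ‖z‖ < 2 * π) :
    Summable (fun n : ℕ => α n • (adL z) ^ n) ∧
    Summable (fun n : ℕ => (((n + 1).factorial : ℝ))⁻¹ • (adL z) ^ n) ∧
    (∑' n : ℕ, α n • (adL z) ^ n) *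
        (-(∑' n : ℕ, (((n + 1).factorial : ℝ))⁻¹ • (adL z) ^ n)) = 1 ∧
    (-(∑' n : ℕ, (((n + 1).factorial : ℝ))⁻¹ • (adL z) ^ n)) *
        (∑' n : ℕ, α n • (adL z) ^ n) = 1 ∧
    IsUnit (-(∑' n : ℕ, (((n + 1).factorial : ℝ))⁻¹ • (adL z) ^ n)) := by
  set a := adL z
  have ha : ‖a‖ < 2 * π :=
    (ContinuousLinearMap.opNorm_le_bound _ (norm_nonneg z) fun c => hadL z c ▸ hsub z c).trans_lt hz
  set p := -bernoulliPowerSeries ℝ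
  set q := -expSubOneDivX ℝ
  have hpq : p * q = 1 := by rw [neg_mul_neg, bernoulliPowerSeries_mul_expSubOneDivX]
  have hp : Summable fun n => ‖coeff n p • a ^ n‖ := summable_norm_smul_pow <| by
    simpa [p] using summable_abs_coeff_bernoulliPowerSeries_mul_pow (norm_nonneg a) ha
  have hq : Summable fun n => ‖coeff n q • a ^ n‖ := summable_norm_smul_pow <| by
    simpa [q] using summable_abs_coeff_expSubOneDivX_mul_pow ‖a‖
  have hαp : (fun n => α n • a ^ n) = fun n => coeff n p • a ^ n := by
    ext1 n; simp [p, hα, bernoulliPowerSeries]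
  have hq_neg (n : ℕ) : coeff n q • a ^ n = -((((n + 1)! : ℝ))⁻¹ • a ^ n) := by
    simp [q, expSubOneDivX, neg_smul]
  have hpq_one := tsum_coeff_smul_pow_mul_eq_one hp hq hpq
  have hqp_one := tsum_coeff_smul_pow_mul_eq_one hq hp (by rw [mul_comm, hpq])
  simp only [hq_neg, norm_neg, tsum_neg] at hq hpq_one hqp_one
  rw [hαp]
  exact ⟨hp.of_norm, hq.of_norm, hpq_one, hqp_one,
    ⟨⟨_, _, hqp_one, hpq_one⟩, rfl⟩⟩

/-- Let `X` be a real Banach-Lie algebra whose norm satisfies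
`‖⁅u,v⁆‖ ≤ ‖u‖·‖v‖`, and let `adL z : X →L[ℝ] X` be the continuous linear map
`c ↦ ⁅z, c⁆`.  Let `αₙ = -Bₙ/n!` be the Maclaurin coefficients of `w ↦ w/(1 - eʷ)`.
Then for every `z` with `‖z‖ < 2π` the series `∑ αₙ (ad z)ⁿ` converges in the Banach
algebra of continuous linear endomorphisms of `X`, and the operator
`(1 - exp(ad z))/(ad z) = -∑ (ad z)ⁿ/(n+1)!` is invertible with two-sided inverse
`∑ αₙ (ad z)ⁿ`.  In particular the open ball of radius `2π` is contained in the set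
`A = {z : (1 - exp(ad z))/(ad z) is invertible}`. -/
theorem ball_two_pi_subset_invertibility_domain
    {X : Type*} [NormedAddCommGroup X] [NormedSpace ℝ X] [CompleteSpace X]
    [LieRing X] [LieAlgebra ℝ X]
    (hsub : ∀ u v : X, ‖⁅u, v⁆‖ ≤ ‖u‖ * ‖v‖)
    (adL : X → X →L[ℝ] X) (hadL : ∀ z c : X, adL z c = ⁅z, c⁆)
    (α : ℕ → ℝ) (hα : ∀ n : ℕ, α n = -((bernoulli n : ℝ) / (n.factorial : ℝ)))
    (z : X) (hz : ‖z‖ < 2 * π) :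
    Summable (fun n : ℕ => α n • (adL z) ^ n) ∧
    Summable (fun n : ℕ => (((n + 1).factorial : ℝ))⁻¹ • (adL z) ^ n) ∧
    (∑' n : ℕ, α n • (adL z) ^ n) *
        (-(∑' n : ℕ, (((n + 1).factorial : ℝ))⁻¹ • (adL z) ^ n)) = 1 ∧
    (-(∑' n : ℕ, (((n + 1).factorial : ℝ))⁻¹ • (adL z) ^ n)) *
        (∑' n : ℕ, α n • (adL z) ^ n) = 1 ∧
    IsUnit (-(∑' n : ℕ, (((n + 1).factorial : ℝ))⁻¹ • (adL z) ^ n)) :=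
  ball_two_pi_subset_invertibility_domain_general hsub adL hadL α hα z hz
end

section
/- Let E be a real Banach space, T ∈ (0,∞], a < 0 < b, Ω := {(t,y) ∈ ℝ×E : |t| < T, ‖y‖ < b}, Ω̃ := (−T,T)×(a,b). Let f : Ω → E satisfy hypothesis (LC), and let g : Ω̃ → ℝ be continuous, locally Lipschitz in its second variable, non-decreasing in z on [0,b) for each fixed t ∈ [0,T), and satisfy the strict majorization ‖f(t,y)‖ < g(|t|,‖y‖) for every (t,y) ∈ Ω. Suppose 0 < c ≤ T, φ : [0,c) → E is differentiable with φ(0) = 0, ‖φ(t)‖ < b and φ'(t) = f(t,φ(t)), and ψ : [0,c) → ℝ is differentiable with ψ(0) = 0, ψ(t) ∈ (a,b) and ψ'(t) = g(t,ψ(t)). Then ‖φ(t)‖ < ψ(t) for every t ∈ (0,c). -/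
/-!
Let `h t := ψ t - ‖φ t‖`, so `h 0 = 0`. Wherever `h` vanishes, strict majorization gives
`‖φ'(t)‖ < ψ'(t)`, and since `‖φ‖` grows no faster than `‖φ'‖`, all difference quotients of `h`
at `t` are eventually positive: `h` crosses each of its zeros strictly upwards. A continuous
function with `h 0 = 0` that crosses its zeros only upwards is positive on `(0, c)`: after the
last zero before a negative value it would have to become positive and then vanish again.
-/

open Set Filter Topology

section SlopeComparison

variable {E : Type*} [NormedAddCommGroup E] [NormedSpace ℝ E]

lemma slope_norm_le_norm_slope (φ : ℝ → E) (a b : ℝ) :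
    slope (fun x => ‖φ x‖) a b ≤ ‖slope φ a b‖ := by
  rw [slope_def_field, slope_def_module, norm_smul, norm_inv, Real.norm_eq_abs, div_eq_inv_mul]
  calc (b - a)⁻¹ * (‖φ b‖ - ‖φ a‖) ≤ |(b - a)⁻¹ * (‖φ b‖ - ‖φ a‖)| := le_abs_self _
    _ = |b - a|⁻¹ * |‖φ b‖ - ‖φ a‖| := by rw [abs_mul, abs_inv]
    _ ≤ |b - a|⁻¹ * ‖φ b - φ a‖ := by gcongr; exact abs_norm_sub_norm_le _ _

lemma eventually_slope_sub_norm_pos {φ : ℝ → E} {ψ : ℝ → ℝ} {s : Set ℝ} {t d : ℝ} {v : E}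
    (hφ : HasDerivWithinAt φ v s t) (hψ : HasDerivWithinAt ψ d s t) (hvd : ‖v‖ < d) :
    ∀ᶠ t' in 𝓝[s \ {t}] t, 0 < slope (fun x => ψ x - ‖φ x‖) t t' := by
  have hnorm : Tendsto (fun t' => ‖slope φ t t'‖) (𝓝[s \ {t}] t) (𝓝 ‖v‖) :=
    (hasDerivWithinAt_iff_tendsto_slope.1 hφ).norm
  filter_upwards [hnorm.eventually_lt (hasDerivWithinAt_iff_tendsto_slope.1 hψ) hvd] with t' ht'
  have hsub : slope (fun x => ψ x - ‖φ x‖) t t' = slope ψ t t' - slope (fun x => ‖φ x‖) t t' := by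
    simp only [slope_def_field]; ring
  rw [hsub]
  linarith [slope_norm_le_norm_slope φ t t']

end SlopeComparison

section UpwardCrossing

variable {h : ℝ → ℝ} {c : ℝ}

lemma not_neg_of_slope_pos_at_zeros (hcont : ContinuousOn h (Ico 0 c)) (h0 : h 0 = 0)
    (hcross : ∀ t ∈ Ico 0 c, h t = 0 → ∀ᶠ t' in 𝓝[Ico 0 c \ {t}] t, 0 < slope h t t')
    {t : ℝ} (ht : t ∈ Ico 0 c) : ¬ h t < 0 := by
  intro hneg
  have hIcc : Icc 0 t ⊆ Ico 0 c := fun s hs => ⟨hs.1, hs.2.trans_lt ht.2⟩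
  set Z := {s ∈ Icc 0 t | h s = 0}
  have hZ : IsCompact Z :=
    isCompact_Icc.of_isClosed_subset
      ((hcont.mono hIcc).preimage_isClosed_of_isClosed isClosed_Icc isClosed_singleton)
      fun s hs => hs.1
  obtain ⟨⟨ht₀0, ht₀t⟩, hht₀⟩ : sSup Z ∈ Z := hZ.sSup_mem ⟨0, ⟨le_rfl, ht.1⟩, h0⟩
  set t₀ := sSup Z
  have ht₀lt : t₀ < t := ht₀t.lt_of_ne fun heq => by rw [heq] at hht₀; linarith
  have hsub : Ioo t₀ t ⊆ Ico 0 c \ {t₀} := fun s hs =>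
    ⟨⟨ht₀0.trans hs.1.le, hs.2.trans ht.2⟩, hs.1.ne'⟩
  have hright : ∀ᶠ t' in 𝓝[Ioo t₀ t] t₀, 0 < slope h t₀ t' :=
    (hcross t₀ (hIcc ⟨ht₀0, ht₀t⟩) hht₀).filter_mono (nhdsWithin_mono _ hsub)
  have := left_nhdsWithin_Ioo_neBot ht₀lt
  obtain ⟨t', hslope, ht'⟩ := (hright.and self_mem_nhdsWithin).exists
  rw [slope_pos_iff ht'.1, hht₀] at hslope
  obtain ⟨s, hs, hhs⟩ := intermediate_value_Icc' ht'.2.le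
    (hcont.mono fun x hx => hIcc ⟨ht₀0.trans (ht'.1.le.trans hx.1), hx.2⟩) ⟨hneg.le, hslope.le⟩
  have : s ≤ t₀ := le_csSup hZ.bddAbove ⟨⟨ht₀0.trans (ht'.1.le.trans hs.1), hs.2⟩, hhs⟩
  linarith [ht'.1, hs.1]

lemma pos_of_slope_pos_at_zeros (hcont : ContinuousOn h (Ico 0 c)) (h0 : h 0 = 0)
    (hcross : ∀ t ∈ Ico 0 c, h t = 0 → ∀ᶠ t' in 𝓝[Ico 0 c \ {t}] t, 0 < slope h t t')
    {t : ℝ} (ht : t ∈ Ioo 0 c) : 0 < h t := by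
  have hIco : t ∈ Ico 0 c := Ioo_subset_Ico_self ht
  refine lt_of_le_of_ne (not_lt.1 (not_neg_of_slope_pos_at_zeros hcont h0 hcross hIco))
    fun hzero => ?_
  have hsub : Ioo 0 t ⊆ Ico 0 c \ {t} := fun s hs => ⟨⟨hs.1.le, hs.2.trans ht.2⟩, hs.2.ne⟩
  have hleft : ∀ᶠ t' in 𝓝[Ioo 0 t] t, 0 < slope h t t' :=
    (hcross t hIco hzero.symm).filter_mono (nhdsWithin_mono _ hsub)
  have := right_nhdsWithin_Ioo_neBot ht.1
  obtain ⟨t', hslope, ht'⟩ := (hleft.and self_mem_nhdsWithin).exists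
  rw [slope_pos_iff_gt ht'.2, ← hzero] at hslope
  exact not_neg_of_slope_pos_at_zeros hcont h0 hcross ⟨ht'.1.le, ht'.2.trans ht.2⟩ hslope

end UpwardCrossing

theorem strict_norm_comparison_of_strict_majorization_general
    {E : Type*} [NormedAddCommGroup E] [NormedSpace ℝ E]
    (T : EReal) (b : ℝ)
    (f : ℝ → E → E) (g : ℝ → ℝ → ℝ)
    -- hypothesis (SMJ) for g w.r.t. f :
    (hmaj : ∀ t : ℝ, ∀ y : E, ((|t| : ℝ) : EReal) < T → ‖y‖ < b →
      ‖f t y‖ < g |t| ‖y‖)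
    -- the two solutions on [0, c) :
    (c : ℝ) (hcT : (c : EReal) ≤ T)
    (φ : ℝ → E) (hφ0 : φ 0 = 0)
    (hφmem : ∀ t ∈ Ico (0 : ℝ) c, ‖φ t‖ < b)
    (hφdiff : ∀ t ∈ Ico (0 : ℝ) c,
      HasDerivWithinAt φ (f t (φ t)) (Ico (0 : ℝ) c) t)
    (ψ : ℝ → ℝ) (hψ0 : ψ 0 = 0)
    (hψdiff : ∀ t ∈ Ico (0 : ℝ) c,
      HasDerivWithinAt ψ (g t (ψ t)) (Ico (0 : ℝ) c) t) :
    ∀ t ∈ Ioo (0 : ℝ) c, ‖φ t‖ < ψ t := by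
  intro t ht
  have hcont : ContinuousOn (fun t => ψ t - ‖φ t‖) (Ico 0 c) := fun s hs =>
    (hψdiff s hs).continuousWithinAt.sub (hφdiff s hs).continuousWithinAt.norm
  have hcross : ∀ s ∈ Ico 0 c, ψ s - ‖φ s‖ = 0 →
      ∀ᶠ s' in 𝓝[Ico 0 c \ {s}] s, 0 < slope (fun t => ψ t - ‖φ t‖) s s' := by
    intro s hs hzero
    have hsT : ((|s| : ℝ) : EReal) < T := by
      rw [abs_of_nonneg hs.1]; exact (EReal.coe_lt_coe_iff.2 hs.2).trans_le hcT
    have hvd : ‖f s (φ s)‖ < g s (ψ s) := by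
      simpa [abs_of_nonneg hs.1, sub_eq_zero.1 hzero] using hmaj s (φ s) hsT (hφmem s hs)
    exact eventually_slope_sub_norm_pos (hφdiff s hs) (hψdiff s hs) hvd
  have := pos_of_slope_pos_at_zeros hcont (by simp [hφ0, hψ0]) hcross ht
  linarith

/-- strict comparison lemma: if `f` satisfies (LC), `g` is continuous,
locally Lipschitz in `z`, non-decreasing in `z` on `[0,b)`, and *strictly* majorizes
`f` (i.e. `‖f(t,y)‖ < g(|t|,‖y‖)` on `Ω`), and if `φ`, `ψ` solve `φ' = f(t,φ)`,
`φ(0) = 0` and `ψ' = g(t,ψ)`, `ψ(0) = 0` on `[0,c)`, then `‖φ(t)‖ < ψ(t)` on `(0,c)`. -/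
theorem strict_norm_comparison_of_strict_majorization
    {E : Type*} [NormedAddCommGroup E] [NormedSpace ℝ E] [CompleteSpace E]
    (T : EReal) (hT : 0 < T) (a b : ℝ) (ha : a < 0) (hb : 0 < b)
    (f : ℝ → E → E) (g : ℝ → ℝ → ℝ)
    -- hypothesis (LC) for f :
    (hf_cont : ContinuousOn (fun p : ℝ × E => f p.1 p.2)
      {p : ℝ × E | ((|p.1| : ℝ) : EReal) < T ∧ ‖p.2‖ < b})
    (hf_lip : ∀ K : Set (ℝ × E), IsCompact K →
      K ⊆ {p : ℝ × E | ((|p.1| : ℝ) : EReal) < T ∧ ‖p.2‖ < b} →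
      ∃ C : ℝ, ∀ p ∈ K, ∀ q ∈ K, p.1 = q.1 →
        ‖f p.1 p.2 - f q.1 q.2‖ ≤ C * ‖p.2 - q.2‖)
    -- hypothesis (SMJ) for g w.r.t. f :
    (hg_cont : ContinuousOn (fun p : ℝ × ℝ => g p.1 p.2)
      {p : ℝ × ℝ | ((|p.1| : ℝ) : EReal) < T ∧ p.2 ∈ Ioo a b})
    (hg_lip : ∀ K : Set (ℝ × ℝ), IsCompact K →
      K ⊆ {p : ℝ × ℝ | ((|p.1| : ℝ) : EReal) < T ∧ p.2 ∈ Ioo a b} →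
      ∃ C : ℝ, ∀ p ∈ K, ∀ q ∈ K, p.1 = q.1 →
        |g p.1 p.2 - g q.1 q.2| ≤ C * |p.2 - q.2|)
    (hg_mono : ∀ t : ℝ, 0 ≤ t → ((t : ℝ) : EReal) < T →
      ∀ z z' : ℝ, 0 ≤ z → z ≤ z' → z' < b → g t z ≤ g t z')
    (hmaj : ∀ t : ℝ, ∀ y : E, ((|t| : ℝ) : EReal) < T → ‖y‖ < b →
      ‖f t y‖ < g |t| ‖y‖)
    -- the two solutions on [0, c) :
    (c : ℝ) (hc0 : 0 < c) (hcT : (c : EReal) ≤ T)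
    (φ : ℝ → E) (hφ0 : φ 0 = 0)
    (hφmem : ∀ t ∈ Ico (0 : ℝ) c, ‖φ t‖ < b)
    (hφdiff : ∀ t ∈ Ico (0 : ℝ) c,
      HasDerivWithinAt φ (f t (φ t)) (Ico (0 : ℝ) c) t)
    (ψ : ℝ → ℝ) (hψ0 : ψ 0 = 0)
    (hψmem : ∀ t ∈ Ico (0 : ℝ) c, ψ t ∈ Ioo a b)
    (hψdiff : ∀ t ∈ Ico (0 : ℝ) c,
      HasDerivWithinAt ψ (g t (ψ t)) (Ico (0 : ℝ) c) t) :
    ∀ t ∈ Ioo (0 : ℝ) c, ‖φ t‖ < ψ t :=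
  strict_norm_comparison_of_strict_majorization_general T b f g hmaj c hcT φ hφ0 hφmem hφdiff ψ hψ0
    hψdiff
end

section
/- Let E be a real Banach space, T ∈ (0,∞], a < 0 < b, Ω := {(t,y) ∈ ℝ×E : |t| < T, ‖y‖ < b}, Ω̃ := (−T,T)×(a,b). Let f : Ω → E satisfy hypothesis (LC) and let g : Ω̃ → ℝ satisfy hypothesis (MJ) with respect to f. Suppose 0 < c ≤ T, φ : [0,c) → E is differentiable with φ(0) = 0, ‖φ(t)‖ < b and φ'(t) = f(t,φ(t)), and ψ : [0,c) → ℝ is differentiable with ψ(0) = 0, ψ(t) ∈ (a,b) and ψ'(t) = g(t,ψ(t)). Then ‖φ(t)‖ ≤ ψ(t) for every t ∈ [0,c); in particular ψ(t) ≥ 0 on [0,c). -/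
/-!
At a first point where `‖φ‖` would touch `ψ + ε e^{L t}` from below (with `L` larger than a
Lipschitz constant of `g` in its second variable along the two graphs), the majorization and the
Lipschitz bound give `‖φ'‖ ≤ g(t, ‖φ‖) ≤ g(t, ψ) + C ε e^{L t} < (ψ + ε e^{L t})'`, so the
fencing theorem for right derivatives keeps `‖φ‖` below the barrier. Letting `ε → 0` gives
`‖φ‖ ≤ ψ`.
-/

open Set

section Comparison

variable {E : Type*} [NormedAddCommGroup E] [NormedSpace ℝ E]
  {φ φ' : ℝ → E} {ψ ψ' : ℝ → ℝ} {a b C : ℝ}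

theorem norm_le_add_mul_exp_of_deriv_right_le
    (hφ : ContinuousOn φ (Icc a b)) (hφ' : ∀ x ∈ Ico a b, HasDerivWithinAt φ (φ' x) (Ici x) x)
    (hψ : ContinuousOn ψ (Icc a b)) (hψ' : ∀ x ∈ Ico a b, HasDerivWithinAt ψ (ψ' x) (Ici x) x)
    (ha : ‖φ a‖ ≤ ψ a)
    (bound : ∀ x ∈ Ico a b, ψ x < ‖φ x‖ → ‖φ' x‖ ≤ ψ' x + C * (‖φ x‖ - ψ x))
    {ε : ℝ} (hε : 0 < ε) :
    ∀ x ∈ Icc a b, ‖φ x‖ ≤ ψ x + ε * Real.exp ((C + 1) * (x - a)) := by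
  set L := C + 1
  have hexp (x : ℝ) : HasDerivAt (fun x => ε * Real.exp (L * (x - a)))
      (ε * (L * Real.exp (L * (x - a)))) x := by
    have := (((hasDerivAt_id x).sub_const a).const_mul L).exp.const_mul ε
    simpa [mul_comm, mul_left_comm] using this
  refine image_norm_le_of_norm_deriv_right_lt_deriv_boundary' hφ hφ'
    (B' := fun x => ψ' x + ε * (L * Real.exp (L * (x - a)))) ?_
    (hψ.add (continuous_const.mul (by fun_prop)).continuousOn)
    (fun x hx => (hψ' x hx).add (hexp x).hasDerivWithinAt) ?_
  · simpa using ha.trans (le_add_of_nonneg_right hε.le)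
  · intro x hx htouch
    have hgap : ‖φ x‖ - ψ x = ε * Real.exp (L * (x - a)) := by rw [htouch]; ring
    have hgap_pos : 0 < ε * Real.exp (L * (x - a)) := by positivity
    calc ‖φ' x‖ ≤ ψ' x + C * (ε * Real.exp (L * (x - a))) :=
          hgap ▸ bound x hx (by linarith)
      _ < ψ' x + L * (ε * Real.exp (L * (x - a))) := by gcongr; exact lt_add_one C
      _ = ψ' x + ε * (L * Real.exp (L * (x - a))) := by ring

theorem norm_le_of_deriv_right_le_add_mul
    (hφ : ContinuousOn φ (Icc a b)) (hφ' : ∀ x ∈ Ico a b, HasDerivWithinAt φ (φ' x) (Ici x) x)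
    (hψ : ContinuousOn ψ (Icc a b)) (hψ' : ∀ x ∈ Ico a b, HasDerivWithinAt ψ (ψ' x) (Ici x) x)
    (ha : ‖φ a‖ ≤ ψ a)
    (bound : ∀ x ∈ Ico a b, ψ x < ‖φ x‖ → ‖φ' x‖ ≤ ψ' x + C * (‖φ x‖ - ψ x)) :
    ∀ x ∈ Icc a b, ‖φ x‖ ≤ ψ x := by
  intro x hx
  refine le_of_forall_pos_le_add fun δ hδ => ?_
  have hexp_pos : 0 < Real.exp ((C + 1) * (x - a)) := Real.exp_pos _
  have := norm_le_add_mul_exp_of_deriv_right_le hφ hφ' hψ hψ' ha bound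
    (div_pos hδ hexp_pos) x hx
  rwa [div_mul_cancel₀ δ hexp_pos.ne'] at this

end Comparison

theorem HasDerivWithinAt.Ici_of_Ico {F : Type*} [NormedAddCommGroup F] [NormedSpace ℝ F]
    {f : ℝ → F} {f' : F} {a b x : ℝ} (h : HasDerivWithinAt f f' (Ico a b) x)
    (hx : x ∈ Ico a b) : HasDerivWithinAt f f' (Ici x) x :=
  h.mono_of_mem_nhdsWithin (Ico_mem_nhdsGE_of_mem hx)

theorem exists_lipschitz_const_between_graphs {g : ℝ → ℝ → ℝ} {S : Set (ℝ × ℝ)}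
    (hg_lip : ∀ K : Set (ℝ × ℝ), IsCompact K → K ⊆ S →
      ∃ C : ℝ, ∀ p ∈ K, ∀ q ∈ K, p.1 = q.1 → |g p.1 p.2 - g q.1 q.2| ≤ C * |p.2 - q.2|)
    {s : Set ℝ} (hs : IsCompact s) {u v : ℝ → ℝ} (hu : ContinuousOn u s) (hv : ContinuousOn v s)
    (huS : ∀ x ∈ s, (x, u x) ∈ S) (hvS : ∀ x ∈ s, (x, v x) ∈ S) :
    ∃ C : ℝ, ∀ x ∈ s, |g x (u x) - g x (v x)| ≤ C * |u x - v x| := by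
  set K := (fun x => (x, u x)) '' s ∪ (fun x => (x, v x)) '' s
  have hK : IsCompact K :=
    (hs.image_of_continuousOn (continuousOn_id.prodMk hu)).union
      (hs.image_of_continuousOn (continuousOn_id.prodMk hv))
  have hKS : K ⊆ S := by
    rintro p (⟨x, hx, rfl⟩ | ⟨x, hx, rfl⟩)
    exacts [huS x hx, hvS x hx]
  obtain ⟨C, hC⟩ := hg_lip K hK hKS
  exact ⟨C, fun x hx => hC _ (Or.inl ⟨x, hx, rfl⟩) _ (Or.inr ⟨x, hx, rfl⟩) rfl⟩

theorem norm_comparison_of_majorization_general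
    {E : Type*} [NormedAddCommGroup E] [NormedSpace ℝ E]
    (T : EReal) (a b : ℝ) (ha : a < 0)
    (f : ℝ → E → E) (g : ℝ → ℝ → ℝ)
    -- hypothesis (SMJ) for g w.r.t. f :
    (hg_lip : ∀ K : Set (ℝ × ℝ), IsCompact K →
      K ⊆ {p : ℝ × ℝ | ((|p.1| : ℝ) : EReal) < T ∧ p.2 ∈ Ioo a b} →
      ∃ C : ℝ, ∀ p ∈ K, ∀ q ∈ K, p.1 = q.1 →
        |g p.1 p.2 - g q.1 q.2| ≤ C * |p.2 - q.2|)
    (hmaj : ∀ t : ℝ, ∀ y : E, ((|t| : ℝ) : EReal) < T → ‖y‖ < b →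
      ‖f t y‖ ≤ g |t| ‖y‖)
    -- the two solutions on [0, c) :
    (c : ℝ) (hcT : (c : EReal) ≤ T)
    (φ : ℝ → E) (hφ0 : φ 0 = 0)
    (hφmem : ∀ t ∈ Ico (0 : ℝ) c, ‖φ t‖ < b)
    (hφdiff : ∀ t ∈ Ico (0 : ℝ) c,
      HasDerivWithinAt φ (f t (φ t)) (Ico (0 : ℝ) c) t)
    (ψ : ℝ → ℝ) (hψ0 : ψ 0 = 0)
    (hψmem : ∀ t ∈ Ico (0 : ℝ) c, ψ t ∈ Ioo a b)
    (hψdiff : ∀ t ∈ Ico (0 : ℝ) c,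
      HasDerivWithinAt ψ (g t (ψ t)) (Ico (0 : ℝ) c) t) :
    ∀ t ∈ Ico (0 : ℝ) c, ‖φ t‖ ≤ ψ t ∧ 0 ≤ ψ t := by
  rintro t ⟨ht0, htc⟩
  have hsub : Icc 0 t ⊆ Ico 0 c := Icc_subset_Ico_right htc
  have hsub' : Ico 0 t ⊆ Ico 0 c := Ico_subset_Ico_right htc.le
  have hφc : ContinuousOn φ (Icc 0 t) := fun x hx =>
    (hφdiff x (hsub hx)).continuousWithinAt.mono hsub
  have hψc : ContinuousOn ψ (Icc 0 t) := fun x hx =>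
    (hψdiff x (hsub hx)).continuousWithinAt.mono hsub
  have hxT : ∀ x ∈ Icc 0 t, ((|x| : ℝ) : EReal) < T := fun x hx => by
    rw [abs_of_nonneg hx.1]
    exact lt_of_lt_of_le (EReal.coe_lt_coe_iff.2 (hx.2.trans_lt htc)) hcT
  obtain ⟨C, hC⟩ := exists_lipschitz_const_between_graphs hg_lip isCompact_Icc hφc.norm hψc
    (fun x hx => ⟨hxT x hx, ha.trans_le (norm_nonneg _), hφmem x (hsub hx)⟩)
    (fun x hx => ⟨hxT x hx, hψmem x (hsub hx)⟩)
  have bound : ∀ x ∈ Ico 0 t, ψ x < ‖φ x‖ →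
      ‖f x (φ x)‖ ≤ g x (ψ x) + C * (‖φ x‖ - ψ x) := fun x hx hgap => by
    have hmaj_x := hmaj x (φ x) (hxT x (Ico_subset_Icc_self hx)) (hφmem x (hsub' hx))
    have hlip_x := hC x (Ico_subset_Icc_self hx)
    rw [abs_of_nonneg hx.1] at hmaj_x
    rw [abs_of_pos (sub_pos.2 hgap)] at hlip_x
    linarith [le_abs_self (g x ‖φ x‖ - g x (ψ x))]
  have hle := norm_le_of_deriv_right_le_add_mul hφc
    (fun x hx => (hφdiff x (hsub' hx)).Ici_of_Ico (hsub' hx)) hψc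
    (fun x hx => (hψdiff x (hsub' hx)).Ici_of_Ico (hsub' hx)) (by simp [hφ0, hψ0]) bound
    t (right_mem_Icc.2 ht0)
  exact ⟨hle, (norm_nonneg _).trans hle⟩

/-- non-strict comparison lemma: if `f` satisfies (LC) and `g` satisfies
hypothesis (MJ) w.r.t. `f`, and if `φ`, `ψ` solve `φ' = f(t,φ)`, `φ(0) = 0` and
`ψ' = g(t,ψ)`, `ψ(0) = 0` on `[0,c)`, then `‖φ(t)‖ ≤ ψ(t)` on `[0,c)`;
in particular `ψ(t) ≥ 0` on `[0,c)`. -/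
theorem norm_comparison_of_majorization
    {E : Type*} [NormedAddCommGroup E] [NormedSpace ℝ E] [CompleteSpace E]
    (T : EReal) (hT : 0 < T) (a b : ℝ) (ha : a < 0) (hb : 0 < b)
    (f : ℝ → E → E) (g : ℝ → ℝ → ℝ)
    -- hypothesis (LC) for f :
    (hf_cont : ContinuousOn (fun p : ℝ × E => f p.1 p.2)
      {p : ℝ × E | ((|p.1| : ℝ) : EReal) < T ∧ ‖p.2‖ < b})
    (hf_lip : ∀ K : Set (ℝ × E), IsCompact K →
      K ⊆ {p : ℝ × E | ((|p.1| : ℝ) : EReal) < T ∧ ‖p.2‖ < b} →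
      ∃ C : ℝ, ∀ p ∈ K, ∀ q ∈ K, p.1 = q.1 →
        ‖f p.1 p.2 - f q.1 q.2‖ ≤ C * ‖p.2 - q.2‖)
    -- hypothesis (SMJ) for g w.r.t. f :
    (hg_cont : ContinuousOn (fun p : ℝ × ℝ => g p.1 p.2)
      {p : ℝ × ℝ | ((|p.1| : ℝ) : EReal) < T ∧ p.2 ∈ Ioo a b})
    (hg_lip : ∀ K : Set (ℝ × ℝ), IsCompact K →
      K ⊆ {p : ℝ × ℝ | ((|p.1| : ℝ) : EReal) < T ∧ p.2 ∈ Ioo a b} →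
      ∃ C : ℝ, ∀ p ∈ K, ∀ q ∈ K, p.1 = q.1 →
        |g p.1 p.2 - g q.1 q.2| ≤ C * |p.2 - q.2|)
    (hg_mono : ∀ t : ℝ, 0 ≤ t → ((t : ℝ) : EReal) < T →
      ∀ z z' : ℝ, 0 ≤ z → z ≤ z' → z' < b → g t z ≤ g t z')
    (hmaj : ∀ t : ℝ, ∀ y : E, ((|t| : ℝ) : EReal) < T → ‖y‖ < b →
      ‖f t y‖ ≤ g |t| ‖y‖)
    -- the two solutions on [0, c) :
    (c : ℝ) (hc0 : 0 < c) (hcT : (c : EReal) ≤ T)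
    (φ : ℝ → E) (hφ0 : φ 0 = 0)
    (hφmem : ∀ t ∈ Ico (0 : ℝ) c, ‖φ t‖ < b)
    (hφdiff : ∀ t ∈ Ico (0 : ℝ) c,
      HasDerivWithinAt φ (f t (φ t)) (Ico (0 : ℝ) c) t)
    (ψ : ℝ → ℝ) (hψ0 : ψ 0 = 0)
    (hψmem : ∀ t ∈ Ico (0 : ℝ) c, ψ t ∈ Ioo a b)
    (hψdiff : ∀ t ∈ Ico (0 : ℝ) c,
      HasDerivWithinAt ψ (g t (ψ t)) (Ico (0 : ℝ) c) t) :
    ∀ t ∈ Ico (0 : ℝ) c, ‖φ t‖ ≤ ψ t ∧ 0 ≤ ψ t :=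
  norm_comparison_of_majorization_general T a b ha f g hg_lip hmaj c hcT φ hφ0 hφmem hφdiff ψ hψ0
    hψmem hψdiff
end

section
/- Let E be a real Banach space, T ∈ (0,∞], a < 0 < b, Ω := {(t,y) ∈ ℝ×E : |t| < T, ‖y‖ < b}, Ω̃ := (−T,T)×(a,b). Let f : Ω → E satisfy hypothesis (LC) and let g : Ω̃ → ℝ satisfy hypothesis (MJ) with respect to f. Let 0 < β̃ ≤ T and suppose ψ : [0,β̃) → ℝ is differentiable with ψ(0) = 0, ψ(t) ∈ [0,b) and ψ'(t) = g(t,ψ(t)) for all t ∈ [0,β̃). Then there exists a differentiable function φ : [0,β̃) → E with φ(0) = 0, ‖φ(t)‖ < b, φ'(t) = f(t,φ(t)) and ‖φ(t)‖ ≤ ψ(t) for every t ∈ [0,β̃). (Equivalently: the right-maximal solution of y' = f(t,y), y(0) = 0 is defined at least on [0,β̃), and is dominated in norm by ψ there.) -/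
/-!
A solution `φ` starting at `0` cannot cross the majorant `ψ`: wherever `‖φ‖` would exceed `ψ`,
`‖φ‖' ≤ ‖f(t, φ)‖ ≤ g(t, ‖φ‖)`, and as `g` is Lipschitz in its second variable, `‖φ‖` never
reaches the barriers `ψ + ε e^{K t}`. Hence solutions on `[0, c]`, `c < β̃`, stay in the region
`‖y‖ ≤ ψ(t)`, where `‖f‖` is bounded through `g`. A solution can therefore be continued past any
`c < β̃` by Picard–Lindelöf, and to the end of an interval `[0, ω)` on which it exists, since
its derivative is bounded there so it has a limit at `ω`. Uniqueness, by Gronwall with the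
Lipschitz constant of `f` on the compact union of the two graphs, makes all these solutions fit
together, and a supremum argument yields existence on all of `[0, β̃)`.
-/

open Set Metric Filter Topology Function
open scoped NNReal

section General

variable {E : Type*} [NormedAddCommGroup E]

theorem UniformContinuousOn.exists_tendsto_nhdsWithin {α β : Type*} [UniformSpace α]
    [UniformSpace β] [CompleteSpace β] {f : α → β} {s : Set α} {a : α}
    (hf : UniformContinuousOn f s) (ha : a ∈ closure s) : ∃ y, Tendsto f (𝓝[s] a) (𝓝 y) := by
  have := mem_closure_iff_nhdsWithin_neBot.1 ha
  refine cauchy_map_iff_exists_tendsto.1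
    (cauchy_map_iff.2 ⟨this, Tendsto.mono_left hf (le_inf ?_ ?_)⟩)
  · exact (Filter.prod_mono nhdsWithin_le_nhds nhdsWithin_le_nhds).trans cauchy_nhds.2
  · rw [← prod_principal_principal]
    exact Filter.prod_mono (le_principal_iff.2 self_mem_nhdsWithin)
      (le_principal_iff.2 self_mem_nhdsWithin)

theorem HasDerivWithinAt.of_notMem_closure {𝕜 F : Type*} [NontriviallyNormedField 𝕜]
    [NormedAddCommGroup F] [NormedSpace 𝕜 F] {f : 𝕜 → F} {f' : F} {s : Set 𝕜} {x : 𝕜}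
    (h : x ∉ closure s) : HasDerivWithinAt f f' s x :=
  hasDerivWithinAt_iff_hasFDerivWithinAt.2 (.of_notMem_closure h)

def LipschitzInSndOnCompacts (f : ℝ → E → E) (U : Set (ℝ × E)) : Prop :=
  ∀ K : Set (ℝ × E), IsCompact K → K ⊆ U →
    ∃ C : ℝ, ∀ p ∈ K, ∀ q ∈ K, p.1 = q.1 → ‖f p.1 p.2 - f q.1 q.2‖ ≤ C * ‖p.2 - q.2‖

end General

section IntegralCurve

variable {E : Type*} [NormedAddCommGroup E] [NormedSpace ℝ E] {γ γ₁ γ₂ : ℝ → E} {v : ℝ → E → E}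
  {s s' : Set ℝ} {a b c t : ℝ}

theorem IsIntegralCurveOn.congr (h : IsIntegralCurveOn γ v s) (hs : EqOn γ₁ γ s) :
    IsIntegralCurveOn γ₁ v s := fun t ht ↦ by
  rw [hs ht]
  exact (h t ht).congr hs (hs ht)

theorem IsIntegralCurveOn.union (h : IsIntegralCurveOn γ v s) (h' : IsIntegralCurveOn γ v s')
    (hs : IsClosed s) (hs' : IsClosed s') : IsIntegralCurveOn γ v (s ∪ s') := by
  intro t _
  have key {u : Set ℝ} (hu : IsClosed u) (hγ : IsIntegralCurveOn γ v u) :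
      HasDerivWithinAt γ (v t (γ t)) u t := by
    by_cases htu : t ∈ u
    · exact hγ t htu
    · exact .of_notMem_closure (by rwa [hu.closure_eq])
  exact (key hs h).union (key hs' h')

theorem IsIntegralCurveOn.glue_Icc (h₁ : IsIntegralCurveOn γ₁ v (Icc a b))
    (h₂ : IsIntegralCurveOn γ₂ v (Icc b c)) (hb : γ₁ b = γ₂ b) :
    IsIntegralCurveOn (fun t ↦ if t ≤ b then γ₁ t else γ₂ t) v (Icc a c) := by
  have h₁' := h₁.congr (γ₁ := fun t ↦ if t ≤ b then γ₁ t else γ₂ t) fun t ht ↦ if_pos ht.2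
  have h₂' := h₂.congr (γ₁ := fun t ↦ if t ≤ b then γ₁ t else γ₂ t) fun t ht ↦ by
    rcases ht.1.eq_or_lt with rfl | hbt
    · simp [hb]
    · simp [not_le.2 hbt]
  refine (h₁'.union h₂' isClosed_Icc isClosed_Icc).mono fun t ht ↦ ?_
  by_cases htb : t ≤ b
  · exact .inl ⟨ht.1, htb⟩
  · exact .inr ⟨(not_le.1 htb).le, ht.2⟩

theorem IsIntegralCurveOn.hasDerivWithinAt_Ici (h : IsIntegralCurveOn γ v (Icc a b))
    (ht : t ∈ Ico a b) : HasDerivWithinAt γ (v t (γ t)) (Ici t) t :=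
  (h t (Ico_subset_Icc_self ht)).mono_of_mem_nhdsWithin (Icc_mem_nhdsGE_of_mem ht)

theorem isIntegralCurveOn_Ico_of_forall_Icc
    (h : ∀ c ∈ Ico a b, IsIntegralCurveOn γ v (Icc a c)) :
    IsIntegralCurveOn γ v (Ico a b) := by
  intro t ht
  have hc : (t + b) / 2 ∈ Ico a b := ⟨by linarith [ht.1, ht.2], by linarith [ht.2]⟩
  refine (h _ hc t ⟨ht.1, by linarith [ht.2]⟩).mono_of_mem_nhdsWithin ?_
  refine mem_of_superset (inter_mem self_mem_nhdsWithin
    (mem_nhdsWithin_of_mem_nhds (Iic_mem_nhds (by linarith [ht.2])))) fun z hz ↦ ⟨hz.1.1, hz.2⟩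

theorem IsIntegralCurveOn.exists_tendsto_nhdsLT [CompleteSpace E] {M : ℝ≥0}
    (h : IsIntegralCurveOn γ v (Ico a b)) (hab : a < b) (hM : ∀ t ∈ Ico a b, ‖v t (γ t)‖ ≤ M) :
    ∃ y, Tendsto γ (𝓝[<] b) (𝓝 y) := by
  have hlip : LipschitzOnWith M γ (Ico a b) :=
    (convex_Ico a b).lipschitzOnWith_of_nnnorm_hasDerivWithin_le h fun t ht ↦ hM t ht
  rw [← nhdsWithin_Ico_eq_nhdsLT hab]
  exact hlip.uniformContinuousOn.exists_tendsto_nhdsWithin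
    (by rw [closure_Ico hab.ne]; exact right_mem_Icc.2 hab.le)

theorem IsIntegralCurveOn.update_Icc {y : E} (h : IsIntegralCurveOn γ v (Ico a b)) (hab : a < b)
    (hy : Tendsto γ (𝓝[<] b) (𝓝 y)) (hv : ContinuousAt (fun p : ℝ × E ↦ v p.1 p.2) (b, y)) :
    IsIntegralCurveOn (update γ b y) v (Icc a b) := by
  have heq : EqOn (update γ b y) γ (Ico a b) := fun t ht ↦ update_of_ne ht.2.ne _ _
  have hIco := h.congr heq
  intro t ht
  rcases ht.2.lt_or_eq with htb | rfl
  · exact (hIco t ⟨ht.1, htb⟩).mono_of_mem_nhdsWithin (mem_of_superset (inter_mem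
      self_mem_nhdsWithin (mem_nhdsWithin_of_mem_nhds (Iio_mem_nhds htb)))
      fun z hz ↦ ⟨hz.1.1, hz.2⟩)
  have hderiv : ∀ x ∈ Ioo a t, HasDerivAt (update γ t y) (v x (γ x)) x := fun x hx ↦ by
    simpa [heq ⟨hx.1.le, hx.2⟩] using (hIco x ⟨hx.1.le, hx.2⟩).hasDerivAt (Ico_mem_nhds hx.1 hx.2)
  rw [update_self]
  refine (hasDerivWithinAt_Iic_of_tendsto_deriv (fun x hx ↦ (hderiv x hx).differentiableAt
    |>.differentiableWithinAt) ?_ (Ioo_mem_nhdsLT hab) ?_).mono Icc_subset_Iic_self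
  · rw [ContinuousWithinAt, update_self]
    exact (hy.mono_left (nhdsWithin_mono _ Ioo_subset_Iio_self)).congr'
      (eventually_nhdsWithin_of_forall fun x hx ↦ (heq ⟨hx.1.le, hx.2⟩).symm)
  · have hlim := hv.tendsto.comp ((tendsto_id.mono_left nhdsWithin_le_nhds).prodMk_nhds hy)
    refine hlim.congr' (eventually_of_mem (Ioo_mem_nhdsLT hab) fun x hx ↦ ?_)
    exact ((hderiv x hx).deriv).symm

end IntegralCurve

theorem image_norm_le_of_norm_deriv_right_le_deriv_boundary_add {E : Type*}
    [NormedAddCommGroup E] [NormedSpace ℝ E] {φ φ' : ℝ → E} {B B' : ℝ → ℝ} {a b η C : ℝ}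
    (hη : 0 < η) (hφ : ContinuousOn φ (Icc a b))
    (hφ' : ∀ x ∈ Ico a b, HasDerivWithinAt φ (φ' x) (Ici x) x) (ha : ‖φ a‖ ≤ B a)
    (hB : ContinuousOn B (Icc a b)) (hB' : ∀ x ∈ Ico a b, HasDerivWithinAt B (B' x) (Ici x) x)
    (bound : ∀ x ∈ Ico a b, B x < ‖φ x‖ → ‖φ x‖ ≤ B x + η → ‖φ' x‖ ≤ B' x + C * (‖φ x‖ - B x)) :
    ∀ ⦃x⦄, x ∈ Icc a b → ‖φ x‖ ≤ B x := by
  obtain ⟨K, hK0, hCK⟩ : ∃ K > 0, C < K :=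
    ⟨max C 0 + 1, by positivity, by linarith [le_max_left C 0]⟩
  -- the barriers `B + ε e^{K (x - a)}` for `ε` small enough
  have key : ∀ ε ∈ Ioo 0 (η / Real.exp (K * (b - a))), ∀ x ∈ Icc a b,
      ‖φ x‖ ≤ B x + ε * Real.exp (K * (x - a)) := by
    rintro ε ⟨hε, hεη⟩
    rw [lt_div_iff₀ (Real.exp_pos _)] at hεη
    have h₀ : ‖φ a‖ ≤ B a + ε * Real.exp (K * (a - a)) := by
      simpa using ha.trans (le_add_of_nonneg_right hε.le)
    have hderiv (x : ℝ) : HasDerivAt (fun x ↦ ε * Real.exp (K * (x - a)))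
        (ε * (Real.exp (K * (x - a)) * (K * 1))) x :=
      (((hasDerivAt_id x).sub_const a).const_mul K).exp.const_mul ε
    refine image_norm_le_of_norm_deriv_right_lt_deriv_boundary' hφ hφ' h₀
      (hB.add (by fun_prop)) (fun x hx ↦ (hB' x hx).add (hderiv x).hasDerivWithinAt) ?_
    intro x hx hcontact
    have he : 0 < ε * Real.exp (K * (x - a)) := mul_pos hε (Real.exp_pos _)
    have hle : ε * Real.exp (K * (x - a)) ≤ η := le_trans (mul_le_mul_of_nonneg_left
      (Real.exp_le_exp.2 (mul_le_mul_of_nonneg_left (by linarith [hx.2]) hK0.le)) hε.le) hεη.le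
    have := bound x hx (by linarith) (by linarith)
    rw [hcontact, add_sub_cancel_left] at this
    linarith [mul_lt_mul_of_pos_right hCK he]
  intro x hx
  refine ge_of_tendsto (x := 𝓝[>] 0) ?_ (eventually_of_mem (Ioo_mem_nhdsGT (by positivity))
    fun ε hε ↦ key ε hε x hx)
  exact ((continuous_const.add (continuous_id.mul continuous_const)).tendsto' 0 _
    (by simp)).mono_left nhdsWithin_le_nhds

namespace LipschitzInSndOnCompacts

variable {E : Type*} [NormedAddCommGroup E] {f : ℝ → E → E} {U V : Set (ℝ × E)}

theorem mono (hf : LipschitzInSndOnCompacts f U) (hVU : V ⊆ U) : LipschitzInSndOnCompacts f V :=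
  fun K hK hKV ↦ hf K hK (hKV.trans hVU)

/-- Cylinders around `p` need not be compact; instead, the compact sets `{p} ∪ {qₙ | n}` for
sequences `qₙ → p` rule out Lipschitz constants that blow up on shrinking cylinders. -/
theorem exists_closedBall (hf : LipschitzInSndOnCompacts f U) (hU : IsOpen U) {p : ℝ × E}
    (hp : p ∈ U) : ∃ ε > 0, closedBall p ε ⊆ U ∧
      ∃ L : ℝ≥0, ∀ t ∈ closedBall p.1 ε, LipschitzOnWith L (f t) (closedBall p.2 ε) := by
  obtain ⟨r, hr, hrU⟩ := nhds_basis_closedBall.mem_iff.1 (hU.mem_nhds hp)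
  set ε : ℕ → ℝ := fun n ↦ r / (n + 1)
  have hε (n : ℕ) : 0 < ε n := by positivity
  have hεr (n : ℕ) : ε n ≤ r := div_le_self hr.le (by linarith [n.cast_nonneg (α := ℝ)])
  have hε0 : Tendsto ε atTop (𝓝 0) := by
    simpa [ε, div_eq_mul_one_div r] using tendsto_one_div_add_atTop_nhds_zero_nat.const_mul r
  suffices ∃ n : ℕ, ∀ t ∈ closedBall p.1 (ε n), LipschitzOnWith n (f t) (closedBall p.2 (ε n)) by
    obtain ⟨n, hn⟩ := this
    exact ⟨ε n, hε n, (closedBall_subset_closedBall (hεr n)).trans hrU, n, hn⟩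
  by_contra! H
  simp only [lipschitzOnWith_iff_dist_le_mul, NNReal.coe_natCast, not_forall, not_le] at H
  choose t ht y hy y' hy' hlt using H
  have hmem (n : ℕ) {z : E} (hz : z ∈ closedBall p.2 (ε n)) : (t n, z) ∈ closedBall p (ε n) := by
    rw [← closedBall_prod_same]; exact ⟨ht n, hz⟩
  have hlim {z : ℕ → E} (hz : ∀ n, z n ∈ closedBall p.2 (ε n)) :
      Tendsto (fun n ↦ (t n, z n)) atTop (𝓝 p) :=
    tendsto_iff_dist_tendsto_zero.2 (squeeze_zero (fun _ ↦ dist_nonneg)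
      (fun n ↦ mem_closedBall.1 (hmem n (hz n))) hε0)
  have hK := (hlim hy).isCompact_insert_range.union (hlim hy').isCompact_insert_range
  obtain ⟨C, hC⟩ := hf _ hK <| by
    rintro q (⟨rfl | ⟨n, rfl⟩⟩ | ⟨rfl | ⟨n, rfl⟩⟩)
    · exact hp
    · exact hrU (closedBall_subset_closedBall (hεr n) (hmem n (hy n)))
    · exact hp
    · exact hrU (closedBall_subset_closedBall (hεr n) (hmem n (hy' n)))
  obtain ⟨n, hn⟩ := exists_nat_ge C
  have h₁ := hC _ (.inl (.inr ⟨n, rfl⟩)) _ (.inr (.inr ⟨n, rfl⟩)) rfl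
  have h₂ := hlt n
  rw [dist_eq_norm, dist_eq_norm] at h₂
  linarith [mul_le_mul_of_nonneg_right hn (norm_nonneg (y n - y' n))]

variable [NormedSpace ℝ E]

theorem exists_isIntegralCurveOn_Icc [CompleteSpace E] (hf : LipschitzInSndOnCompacts f U)
    (hU : IsOpen U) (hcont : ContinuousOn (fun p : ℝ × E ↦ f p.1 p.2) U) {t₀ : ℝ} {y₀ : E}
    (hp : (t₀, y₀) ∈ U) :
    ∃ δ > 0, ∃ θ : ℝ → E, θ t₀ = y₀ ∧ IsIntegralCurveOn θ f (Icc t₀ (t₀ + δ)) := by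
  obtain ⟨ε, hε, hεU, L, hL⟩ := hf.exists_closedBall hU hp
  have hcyl {t : ℝ} {y : E} (ht : t ∈ closedBall t₀ ε) (hy : y ∈ closedBall y₀ ε) : (t, y) ∈ U := by
    rw [← closedBall_prod_same] at hεU; exact hεU ⟨ht, hy⟩
  have hcont' {y : E} (hy : y ∈ closedBall y₀ ε) : ContinuousOn (f · y) (closedBall t₀ ε) :=
    hcont.comp (continuous_id.prodMk continuous_const).continuousOn fun t ht ↦ hcyl ht hy
  obtain ⟨M, hM⟩ := (isCompact_closedBall t₀ ε).exists_bound_of_continuousOn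
    (hcont' (mem_closedBall_self hε.le))
  obtain ⟨B, hB0, hB⟩ : ∃ B ≥ 0, ∀ t ∈ closedBall t₀ ε, ∀ y ∈ closedBall y₀ ε, ‖f t y‖ ≤ B := by
    refine ⟨M + L * ε, (norm_nonneg _).trans ((hM t₀ (mem_closedBall_self hε.le)).trans
      (le_add_of_nonneg_right (by positivity))), fun t ht y hy ↦ ?_⟩
    calc ‖f t y‖ ≤ ‖f t y₀‖ + ‖f t y - f t y₀‖ := norm_le_norm_add_norm_sub' _ _
      _ ≤ M + L * ε := add_le_add (hM t ht) <| by
        rw [← dist_eq_norm]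
        exact ((hL t ht).dist_le_mul y hy y₀ (mem_closedBall_self hε.le)).trans
          (mul_le_mul_of_nonneg_left (mem_closedBall.1 hy) L.2)
  set δ := ε / (B + 1)
  have hδ : 0 < δ := by positivity
  have hBδ : B * δ ≤ ε := by
    rw [mul_div_assoc', div_le_iff₀ (by positivity)]; nlinarith
  have hsub : Icc t₀ (t₀ + δ) ⊆ closedBall t₀ ε := by
    rw [Real.closedBall_eq_Icc]
    exact Icc_subset_Icc (by linarith)
      (by linarith [div_le_self hε.le (le_add_of_nonneg_left hB0 : (1 : ℝ) ≤ B + 1)])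
  have hPL : IsPicardLindelof f (tmin := t₀) (tmax := t₀ + δ) ⟨t₀, left_mem_Icc.2 (by linarith)⟩
      y₀ ⟨ε, hε.le⟩ 0 ⟨B, hB0⟩ L :=
    { lipschitzOnWith := fun t ht ↦ hL t (hsub ht)
      continuousOn := fun y hy ↦ (hcont' hy).mono hsub
      norm_le := fun t ht y hy ↦ hB t (hsub ht) y hy
      mul_max_le := by
        change B * max (t₀ + δ - t₀) (t₀ - t₀) ≤ ε - 0
        rwa [add_sub_cancel_left, sub_self, max_eq_left hδ.le, sub_zero] }
  exact ⟨δ, hδ, hPL.exists_eq_forall_mem_Icc_hasDerivWithinAt₀⟩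

theorem eqOn_of_isIntegralCurveOn_Icc (hf : LipschitzInSndOnCompacts f U) {a b : ℝ}
    {γ₁ γ₂ : ℝ → E} (h₁ : IsIntegralCurveOn γ₁ f (Icc a b)) (h₂ : IsIntegralCurveOn γ₂ f (Icc a b))
    (hU₁ : MapsTo (fun t ↦ (t, γ₁ t)) (Icc a b) U) (hU₂ : MapsTo (fun t ↦ (t, γ₂ t)) (Icc a b) U)
    (ha : γ₁ a = γ₂ a) : EqOn γ₁ γ₂ (Icc a b) := by
  set K := (fun t ↦ (t, γ₁ t)) '' Icc a b ∪ (fun t ↦ (t, γ₂ t)) '' Icc a b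
  have hK : IsCompact K :=
    (isCompact_Icc.image_of_continuousOn (continuousOn_id.prodMk h₁.continuousOn)).union
      (isCompact_Icc.image_of_continuousOn (continuousOn_id.prodMk h₂.continuousOn))
  obtain ⟨C, hC⟩ := hf K hK (union_subset hU₁.image_subset hU₂.image_subset)
  -- on the time slices of the compact set `K`, `f` is uniformly Lipschitz in `y`
  refine ODE_solution_unique_of_mem_Icc_right (s := fun t ↦ {y | (t, y) ∈ K}) (K := C.toNNReal)
    (fun t _ ↦ LipschitzOnWith.of_dist_le_mul fun y hy y' hy' ↦ ?_) h₁.continuousOn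
    (fun t ht ↦ h₁.hasDerivWithinAt_Ici ht) (fun t ht ↦ .inl ⟨t, Ico_subset_Icc_self ht, rfl⟩)
    h₂.continuousOn (fun t ht ↦ h₂.hasDerivWithinAt_Ici ht)
    (fun t ht ↦ .inr ⟨t, Ico_subset_Icc_self ht, rfl⟩) ha
  rw [dist_eq_norm, dist_eq_norm]
  exact (hC _ hy _ hy' rfl).trans
    (mul_le_mul_of_nonneg_right (Real.le_coe_toNNReal C) (norm_nonneg _))

theorem exists_isIntegralCurveOn_Ico (hf : LipschitzInSndOnCompacts f U) {a b : ℝ} {y₀ : E}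
    (hab : a < b) (h : ∀ c ∈ Ico a b, ∃ γ : ℝ → E, γ a = y₀ ∧ IsIntegralCurveOn γ f (Icc a c) ∧
      MapsTo (fun t ↦ (t, γ t)) (Icc a c) U) :
    ∃ Γ : ℝ → E, Γ a = y₀ ∧ IsIntegralCurveOn Γ f (Ico a b) ∧
      MapsTo (fun t ↦ (t, Γ t)) (Ico a b) U := by
  choose! γ hγa hγ hγU using h
  have hagree {c c'} (hc : c ∈ Ico a b) (hc' : c' ∈ Ico a b) (hcc' : c ≤ c') :
      EqOn (γ c) (γ c') (Icc a c) :=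
    hf.eqOn_of_isIntegralCurveOn_Icc (hγ c hc) ((hγ c' hc').mono (Icc_subset_Icc_right hcc'))
      (hγU c hc) ((hγU c' hc').mono_left (Icc_subset_Icc_right hcc')) (by rw [hγa c hc, hγa c' hc'])
  have hmid {t} (ht : t ∈ Ico a b) : (t + b) / 2 ∈ Ico a b :=
    ⟨by linarith [ht.1, ht.2], by linarith [ht.2]⟩
  have hEq {c} (hc : c ∈ Ico a b) : EqOn (fun t ↦ γ ((t + b) / 2) t) (γ c) (Icc a c) := by
    intro t ht
    have ht' : t ∈ Ico a b := ⟨ht.1, ht.2.trans_lt hc.2⟩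
    rcases le_total ((t + b) / 2) c with hle | hle
    · exact hagree (hmid ht') hc hle ⟨ht.1, by linarith [ht'.2]⟩
    · exact (hagree hc (hmid ht') hle ht).symm
  refine ⟨fun t ↦ γ ((t + b) / 2) t, hγa _ (hmid ⟨le_rfl, hab⟩),
    isIntegralCurveOn_Ico_of_forall_Icc fun c hc ↦ (hγ c hc).congr (hEq hc), fun t ht ↦ ?_⟩
  exact hγU _ (hmid ht) ⟨ht.1, by linarith [ht.2]⟩

end LipschitzInSndOnCompacts

section Comparison

variable {E : Type*} [NormedAddCommGroup E]

/-- The domain `Ω` of `f`. -/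
def cylinder (T : EReal) (b : ℝ) : Set (ℝ × E) := {p | ((|p.1| : ℝ) : EReal) < T ∧ ‖p.2‖ < b}

theorem isOpen_cylinder (T : EReal) (b : ℝ) : IsOpen (cylinder (E := E) T b) :=
  (isOpen_Iio.preimage (continuous_coe_real_ereal.comp (continuous_abs.comp continuous_fst))).inter
    (isOpen_lt (continuous_norm.comp continuous_snd) continuous_const)

def regionBelow (ψ : ℝ → ℝ) (β' : ℝ) : Set (ℝ × E) := {p | p.1 ∈ Ico 0 β' ∧ ‖p.2‖ ≤ ψ p.1}

structure IsMajorantSolution (T : EReal) (a b : ℝ) (f : ℝ → E → E) (g : ℝ → ℝ → ℝ) (β' : ℝ)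
    (ψ : ℝ → ℝ) : Prop where
  a_neg : a < 0
  f_cont : ContinuousOn (fun p : ℝ × E ↦ f p.1 p.2) (cylinder T b)
  f_lip : LipschitzInSndOnCompacts f (cylinder T b)
  g_cont : ContinuousOn (fun p : ℝ × ℝ ↦ g p.1 p.2)
    {p : ℝ × ℝ | ((|p.1| : ℝ) : EReal) < T ∧ p.2 ∈ Ioo a b}
  g_lip : LipschitzInSndOnCompacts g {p : ℝ × ℝ | ((|p.1| : ℝ) : EReal) < T ∧ p.2 ∈ Ioo a b}
  norm_le : ∀ t : ℝ, ∀ y : E, ((|t| : ℝ) : EReal) < T → ‖y‖ < b → ‖f t y‖ ≤ g |t| ‖y‖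
  le_T : (β' : EReal) ≤ T
  mem_Ico : ∀ t ∈ Ico (0 : ℝ) β', ψ t ∈ Ico (0 : ℝ) b
  hasDerivWithinAt : ∀ t ∈ Ico (0 : ℝ) β', HasDerivWithinAt ψ (g t (ψ t)) (Ico (0 : ℝ) β') t

namespace IsMajorantSolution

variable {T : EReal} {a b β' c : ℝ} {f : ℝ → E → E} {g : ℝ → ℝ → ℝ} {ψ : ℝ → ℝ}

theorem coe_abs_lt (h : IsMajorantSolution T a b f g β' ψ) {t : ℝ} (ht : t ∈ Ico 0 β') :
    ((|t| : ℝ) : EReal) < T := by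
  rw [abs_of_nonneg ht.1]
  exact (EReal.coe_lt_coe_iff.2 ht.2).trans_le h.le_T

theorem regionBelow_subset (h : IsMajorantSolution T a b f g β' ψ) :
    regionBelow ψ β' ⊆ cylinder (E := E) T b :=
  fun _ hp ↦ ⟨h.coe_abs_lt hp.1, hp.2.trans_lt (h.mem_Ico _ hp.1).2⟩

theorem continuousOn (h : IsMajorantSolution T a b f g β' ψ) : ContinuousOn ψ (Ico 0 β') :=
  fun t ht ↦ (h.hasDerivWithinAt t ht).continuousWithinAt

theorem exists_lt_forall_le (h : IsMajorantSolution T a b f g β' ψ) (hc : c ∈ Ico 0 β') :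
    ∃ ρ < b, ∀ t ∈ Icc 0 c, ψ t ≤ ρ := by
  obtain ⟨t₁, ht₁, hmax⟩ := isCompact_Icc.exists_isMaxOn (nonempty_Icc.2 hc.1)
    (h.continuousOn.mono (Icc_subset_Ico_right hc.2))
  exact ⟨ψ t₁, (h.mem_Ico t₁ ⟨ht₁.1, ht₁.2.trans_lt hc.2⟩).2, fun _ ht ↦ hmax ht⟩

theorem exists_bound_on_regionBelow (h : IsMajorantSolution T a b f g β' ψ) (hc : c ∈ Ico 0 β') :
    ∃ M : ℝ≥0, ∀ p ∈ regionBelow (E := E) ψ β', p.1 ≤ c → ‖f p.1 p.2‖ ≤ M := by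
  obtain ⟨ρ, hρb, hρ⟩ := h.exists_lt_forall_le hc
  obtain ⟨M, hM⟩ := (isCompact_Icc.prod isCompact_Icc : IsCompact (Icc 0 c ×ˢ Icc 0 ρ))
    |>.exists_bound_of_continuousOn <| h.g_cont.mono fun q hq ↦
      ⟨h.coe_abs_lt ⟨hq.1.1, hq.1.2.trans_lt hc.2⟩, h.a_neg.trans_le hq.2.1, hq.2.2.trans_lt hρb⟩
  refine ⟨M.toNNReal, fun p hp hpc ↦ ?_⟩
  have hnorm : ‖p.2‖ ≤ ρ := hp.2.trans (hρ p.1 ⟨hp.1.1, hpc⟩)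
  have hmaj := h.norm_le p.1 p.2 (h.coe_abs_lt hp.1) (hnorm.trans_lt hρb)
  rw [abs_of_nonneg hp.1.1] at hmaj
  calc ‖f p.1 p.2‖ ≤ g p.1 ‖p.2‖ := hmaj
    _ ≤ ‖g p.1 ‖p.2‖‖ := Real.le_norm_self _
    _ ≤ M := hM (p.1, ‖p.2‖) ⟨⟨hp.1.1, hpc⟩, norm_nonneg _, hnorm⟩
    _ ≤ M.toNNReal := Real.le_coe_toNNReal M

end IsMajorantSolution

variable [NormedSpace ℝ E]

def HasSolutionBelow (f : ℝ → E → E) (ψ : ℝ → ℝ) (β' c : ℝ) : Prop :=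
  ∃ φ : ℝ → E, φ 0 = 0 ∧ IsIntegralCurveOn φ f (Icc 0 c) ∧
    MapsTo (fun t ↦ (t, φ t)) (Icc 0 c) (regionBelow ψ β')

theorem HasSolutionBelow.mono {f : ℝ → E → E} {ψ : ℝ → ℝ} {β' c c' : ℝ}
    (h : HasSolutionBelow f ψ β' c') (hcc' : c ≤ c') : HasSolutionBelow f ψ β' c :=
  let ⟨φ, hφ0, hφ, hφψ⟩ := h
  ⟨φ, hφ0, hφ.mono (Icc_subset_Icc_right hcc'), hφψ.mono_left (Icc_subset_Icc_right hcc')⟩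

namespace IsMajorantSolution

variable {T : EReal} {a b β' c : ℝ} {f : ℝ → E → E} {g : ℝ → ℝ → ℝ} {ψ : ℝ → ℝ}

theorem norm_le_of_isIntegralCurveOn (h : IsMajorantSolution T a b f g β' ψ) {σ : ℝ}
    {φ : ℝ → E} (hσ : 0 ≤ σ) (hσc : σ ≤ c) (hc : c < β') (hφ : IsIntegralCurveOn φ f (Icc σ c))
    (hφσ : ‖φ σ‖ ≤ ψ σ) : ∀ t ∈ Icc σ c, ‖φ t‖ ≤ ψ t := by
  have hsub : Icc σ c ⊆ Ico 0 β' := fun t ht ↦ ⟨hσ.trans ht.1, ht.2.trans_lt hc⟩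
  have hsub' : Ico σ c ⊆ Ico 0 β' := Ico_subset_Icc_self.trans hsub
  obtain ⟨ρ, hρb, hρ⟩ := h.exists_lt_forall_le ⟨hσ.trans hσc, hc⟩
  obtain ⟨η, hη, hηb⟩ : ∃ η > 0, ρ + η < b := ⟨(b - ρ) / 2, by linarith, by linarith⟩
  obtain ⟨C, hC⟩ := h.g_lip (Icc 0 c ×ˢ Icc 0 (ρ + η)) (isCompact_Icc.prod isCompact_Icc)
    fun p hp ↦ ⟨h.coe_abs_lt ⟨hp.1.1, hp.1.2.trans_lt hc⟩,
      h.a_neg.trans_le hp.2.1, by linarith [hp.2.2]⟩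
  refine image_norm_le_of_norm_deriv_right_le_deriv_boundary_add (C := C) hη hφ.continuousOn
    (fun t ht ↦ hφ.hasDerivWithinAt_Ici ht) hφσ (h.continuousOn.mono hsub)
    (fun t ht ↦ (h.hasDerivWithinAt t (hsub' ht)).mono_of_mem_nhdsWithin
      (Ico_mem_nhdsGE_of_mem (hsub' ht))) fun t ht hlt hle ↦ ?_
  have ht0 : 0 ≤ t := hσ.trans ht.1
  have hψt := h.mem_Ico t (hsub' ht)
  have hψρ := hρ t ⟨ht0, ht.2.le⟩
  have hlip := hC (t, ‖φ t‖) ⟨⟨ht0, ht.2.le⟩, norm_nonneg _, by linarith⟩ (t, ψ t)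
    ⟨⟨ht0, ht.2.le⟩, hψt.1, by linarith⟩ rfl
  simp only [Real.norm_eq_abs] at hlip
  rw [abs_of_pos (sub_pos.2 hlt)] at hlip
  calc ‖f t (φ t)‖ ≤ g t ‖φ t‖ := by
        simpa only [abs_of_nonneg ht0] using
          h.norm_le t (φ t) (h.coe_abs_lt (hsub' ht)) (by linarith)
    _ ≤ g t (ψ t) + C * (‖φ t‖ - ψ t) := by linarith [le_abs_self (g t ‖φ t‖ - g t (ψ t))]

variable [CompleteSpace E]

theorem exists_gt_hasSolutionBelow (h : IsMajorantSolution T a b f g β' ψ) (hc : c ∈ Ico 0 β')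
    (hP : HasSolutionBelow f ψ β' c) : ∃ c' ∈ Ioo c β', HasSolutionBelow f ψ β' c' := by
  obtain ⟨φ, hφ0, hφ, hφψ⟩ := hP
  have hφc : (c, φ c) ∈ regionBelow ψ β' := hφψ ⟨hc.1, le_rfl⟩
  obtain ⟨δ, hδ, θ, hθc, hθ⟩ := h.f_lip.exists_isIntegralCurveOn_Icc (isOpen_cylinder T b)
    h.f_cont (h.regionBelow_subset hφc)
  set c' := min (c + δ) ((c + β') / 2)
  have hc' : c' ∈ Ioo c β' :=
    ⟨lt_min (by linarith) (by linarith [hc.2]), (min_le_right _ _).trans_lt (by linarith [hc.2])⟩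
  have hθ' : IsIntegralCurveOn θ f (Icc c c') := hθ.mono (Icc_subset_Icc_right (min_le_left _ _))
  have hθψ := h.norm_le_of_isIntegralCurveOn hc.1 hc'.1.le hc'.2 hθ' (by rw [hθc]; exact hφc.2)
  refine ⟨c', hc', _, by simp only [if_pos hc.1, hφ0], hφ.glue_Icc hθ' hθc.symm, fun t ht ↦ ?_⟩
  by_cases htc : t ≤ c
  · simpa only [if_pos htc] using hφψ ⟨ht.1, htc⟩
  · simp only [if_neg htc]
    exact ⟨⟨ht.1, ht.2.trans_lt hc'.2⟩, hθψ t ⟨(not_le.1 htc).le, ht.2⟩⟩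

theorem hasSolutionBelow_of_forall_lt (h : IsMajorantSolution T a b f g β' ψ) {ω : ℝ} (hω : 0 < ω)
    (hωβ : ω < β') (hP : ∀ c ∈ Ico 0 ω, HasSolutionBelow f ψ β' c) :
    HasSolutionBelow f ψ β' ω := by
  obtain ⟨Γ, hΓ0, hΓ, hΓψ⟩ := (h.f_lip.mono h.regionBelow_subset).exists_isIntegralCurveOn_Ico hω hP
  obtain ⟨M, hM⟩ := h.exists_bound_on_regionBelow ⟨hω.le, hωβ⟩
  obtain ⟨y, hy⟩ := hΓ.exists_tendsto_nhdsLT hω fun t ht ↦ hM _ (hΓψ ht) ht.2.le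
  have hyψ : ‖y‖ ≤ ψ ω := by
    refine le_of_tendsto_of_tendsto hy.norm ?_
      (eventually_of_mem (Ico_mem_nhdsLT hω) fun t ht ↦ (hΓψ ht).2)
    rw [← nhdsWithin_Ico_eq_nhdsLT hω]
    exact (h.continuousOn ω ⟨hω.le, hωβ⟩).mono (Ico_subset_Ico_right hωβ.le)
  have hωy : (ω, y) ∈ regionBelow ψ β' := ⟨⟨hω.le, hωβ⟩, hyψ⟩
  refine ⟨update Γ ω y, by rw [update_of_ne hω.ne]; exact hΓ0, hΓ.update_Icc hω hy
    (h.f_cont.continuousAt ((isOpen_cylinder T b).mem_nhds (h.regionBelow_subset hωy))),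
    fun t ht ↦ ?_⟩
  rcases ht.2.lt_or_eq with htω | rfl
  · simpa [update_of_ne htω.ne] using hΓψ ⟨ht.1, htω⟩
  · simpa using hωy

theorem hasSolutionBelow (h : IsMajorantSolution T a b f g β' ψ) (hc : c ∈ Ico 0 β') :
    HasSolutionBelow f ψ β' c := by
  have hβ' : 0 < β' := hc.1.trans_lt hc.2
  have base : HasSolutionBelow f ψ β' 0 := by
    refine ⟨0, rfl, ?_, ?_⟩
    · rw [Icc_self]
      intro t ht
      rw [mem_singleton_iff.1 ht, ← hasDerivWithinAt_sdiff_singleton, sdiff_self]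
      exact .of_notMem_closure (by simp)
    · rw [Icc_self, mapsTo_singleton]
      exact ⟨⟨le_rfl, hβ'⟩, by simpa using (h.mem_Ico 0 ⟨le_rfl, hβ'⟩).1⟩
  set S := {c ∈ Ico 0 β' | HasSolutionBelow f ψ β' c}
  have h0S : 0 ∈ S := ⟨⟨le_rfl, hβ'⟩, base⟩
  have hbdd : BddAbove S := ⟨β', fun c hc ↦ hc.1.2.le⟩
  have hbelow (c : ℝ) (hc : c ∈ Ico 0 (sSup S)) : HasSolutionBelow f ψ β' c := by
    obtain ⟨c', hc'S, hcc'⟩ := exists_lt_of_lt_csSup ⟨0, h0S⟩ hc.2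
    exact hc'S.2.mono hcc'.le
  have hω0 : 0 ≤ sSup S := le_csSup hbdd h0S
  suffices sSup S = β' from hbelow c (this ▸ hc)
  by_contra hne
  have hlt : sSup S < β' := (csSup_le ⟨0, h0S⟩ fun c hc ↦ hc.1.2.le).lt_of_ne hne
  have hP : HasSolutionBelow f ψ β' (sSup S) := by
    rcases hω0.eq_or_lt with hω | hω
    · rwa [← hω]
    · exact h.hasSolutionBelow_of_forall_lt hω hlt hbelow
  obtain ⟨c', hc', hP'⟩ := h.exists_gt_hasSolutionBelow ⟨hω0, hlt⟩ hP
  exact (le_csSup hbdd ⟨⟨hω0.trans hc'.1.le, hc'.2⟩, hP'⟩).not_gt hc'.1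

end IsMajorantSolution

end Comparison

theorem lifetime_comparison_right_sided_zero_general
    {E : Type*} [NormedAddCommGroup E] [NormedSpace ℝ E] [CompleteSpace E]
    (T : EReal) (a b : ℝ) (ha : a < 0)
    (f : ℝ → E → E) (g : ℝ → ℝ → ℝ)
    -- hypothesis (LC) for f :
    (hf_cont : ContinuousOn (fun p : ℝ × E => f p.1 p.2)
      {p : ℝ × E | ((|p.1| : ℝ) : EReal) < T ∧ ‖p.2‖ < b})
    (hf_lip : ∀ K : Set (ℝ × E), IsCompact K →
      K ⊆ {p : ℝ × E | ((|p.1| : ℝ) : EReal) < T ∧ ‖p.2‖ < b} →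
      ∃ C : ℝ, ∀ p ∈ K, ∀ q ∈ K, p.1 = q.1 →
        ‖f p.1 p.2 - f q.1 q.2‖ ≤ C * ‖p.2 - q.2‖)
    -- hypothesis (MJ) for g w.r.t. f :
    (hg_cont : ContinuousOn (fun p : ℝ × ℝ => g p.1 p.2)
      {p : ℝ × ℝ | ((|p.1| : ℝ) : EReal) < T ∧ p.2 ∈ Ioo a b})
    (hg_lip : ∀ K : Set (ℝ × ℝ), IsCompact K →
      K ⊆ {p : ℝ × ℝ | ((|p.1| : ℝ) : EReal) < T ∧ p.2 ∈ Ioo a b} →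
      ∃ C : ℝ, ∀ p ∈ K, ∀ q ∈ K, p.1 = q.1 →
        |g p.1 p.2 - g q.1 q.2| ≤ C * |p.2 - q.2|)
    (hmaj : ∀ t : ℝ, ∀ y : E, ((|t| : ℝ) : EReal) < T → ‖y‖ < b →
      ‖f t y‖ ≤ g |t| ‖y‖)
    -- the initial datum and the majorizing solution ψ on [0, β̃) :
    (β' : ℝ) (hβ'0 : 0 < β') (hβ'T : (β' : EReal) ≤ T)
    (ψ : ℝ → ℝ)
    (hψmem : ∀ t ∈ Ico (0 : ℝ) β', ψ t ∈ Ico (0 : ℝ) b)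
    (hψdiff : ∀ t ∈ Ico (0 : ℝ) β',
      HasDerivWithinAt ψ (g t (ψ t)) (Ico (0 : ℝ) β') t) :
    ∃ φ : ℝ → E, φ 0 = 0 ∧
      ∀ t ∈ Ico (0 : ℝ) β', ‖φ t‖ < b ∧
        HasDerivWithinAt φ (f t (φ t)) (Ico (0 : ℝ) β') t ∧
        ‖φ t‖ ≤ ψ t := by
  have h : IsMajorantSolution T a b f g β' ψ :=
    ⟨ha, hf_cont, hf_lip, hg_cont, hg_lip, hmaj, hβ'T, hψmem, hψdiff⟩
  obtain ⟨φ, hφ0, hφ, hφψ⟩ := (h.f_lip.mono h.regionBelow_subset).exists_isIntegralCurveOn_Ico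
    hβ'0 fun _ ↦ h.hasSolutionBelow
  exact ⟨φ, hφ0, fun t ht ↦ ⟨(hφψ ht).2.trans_lt (hψmem t ht).2, hφ t ht, (hφψ ht).2⟩⟩

/-- Mérigot's comparison theorem, right-sided version with zero initial
datum:  `f` satisfies hypothesis (LC) on `Ω = {(t,y) : |t| < T, ‖y‖ < b}` and `g`
satisfies hypothesis (MJ) w.r.t. `f` on `Ω̃ = (-T,T)×(a,b)`.  If `ψ` solves
`ψ' = g(t,ψ)`, `ψ(0) = 0` on `[0,β̃)` with values in `[0,b)`, then there is a
solution `φ` of `y' = f(t,y)`, `y(0) = 0` on the whole of `[0,β̃)`, with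
`‖φ(t)‖ ≤ ψ(t)` there. -/
theorem lifetime_comparison_right_sided_zero
    {E : Type*} [NormedAddCommGroup E] [NormedSpace ℝ E] [CompleteSpace E]
    (T : EReal) (hT : 0 < T) (a b : ℝ) (ha : a < 0) (hb : 0 < b)
    (f : ℝ → E → E) (g : ℝ → ℝ → ℝ)
    -- hypothesis (LC) for f :
    (hf_cont : ContinuousOn (fun p : ℝ × E => f p.1 p.2)
      {p : ℝ × E | ((|p.1| : ℝ) : EReal) < T ∧ ‖p.2‖ < b})
    (hf_lip : ∀ K : Set (ℝ × E), IsCompact K →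
      K ⊆ {p : ℝ × E | ((|p.1| : ℝ) : EReal) < T ∧ ‖p.2‖ < b} →
      ∃ C : ℝ, ∀ p ∈ K, ∀ q ∈ K, p.1 = q.1 →
        ‖f p.1 p.2 - f q.1 q.2‖ ≤ C * ‖p.2 - q.2‖)
    -- hypothesis (MJ) for g w.r.t. f :
    (hg_cont : ContinuousOn (fun p : ℝ × ℝ => g p.1 p.2)
      {p : ℝ × ℝ | ((|p.1| : ℝ) : EReal) < T ∧ p.2 ∈ Ioo a b})
    (hg_lip : ∀ K : Set (ℝ × ℝ), IsCompact K →
      K ⊆ {p : ℝ × ℝ | ((|p.1| : ℝ) : EReal) < T ∧ p.2 ∈ Ioo a b} →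
      ∃ C : ℝ, ∀ p ∈ K, ∀ q ∈ K, p.1 = q.1 →
        |g p.1 p.2 - g q.1 q.2| ≤ C * |p.2 - q.2|)
    (hg_mono : ∀ t : ℝ, 0 ≤ t → ((t : ℝ) : EReal) < T →
      ∀ z z' : ℝ, 0 ≤ z → z ≤ z' → z' < b → g t z ≤ g t z')
    (hmaj : ∀ t : ℝ, ∀ y : E, ((|t| : ℝ) : EReal) < T → ‖y‖ < b →
      ‖f t y‖ ≤ g |t| ‖y‖)
    -- the initial datum and the majorizing solution ψ on [0, β̃) :
    (β' : ℝ) (hβ'0 : 0 < β') (hβ'T : (β' : EReal) ≤ T)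
    (ψ : ℝ → ℝ) (hψ0 : ψ 0 = 0)
    (hψmem : ∀ t ∈ Ico (0 : ℝ) β', ψ t ∈ Ico (0 : ℝ) b)
    (hψdiff : ∀ t ∈ Ico (0 : ℝ) β',
      HasDerivWithinAt ψ (g t (ψ t)) (Ico (0 : ℝ) β') t) :
    ∃ φ : ℝ → E, φ 0 = 0 ∧
      ∀ t ∈ Ico (0 : ℝ) β', ‖φ t‖ < b ∧
        HasDerivWithinAt φ (f t (φ t)) (Ico (0 : ℝ) β') t ∧
        ‖φ t‖ ≤ ψ t :=
  lifetime_comparison_right_sided_zero_general T a b ha f g hf_cont hf_lip hg_cont hg_lip hmaj β'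
    hβ'0 hβ'T ψ hψmem hψdiff
end

section
/- Let 0 ≤ ρ < 2π and γ > 0, and set β̃ := (1/γ)·∫_ρ^{2π} du/G(u), where G(u) = 2 + (u/2)(1 − cot(u/2)) for u ∈ (−2π,2π) (extended by G(0) = 1). Then G is continuous and strictly positive on [0,2π), 1/G is bounded on [0,2π) (so β̃ < ∞), and there exists a strictly increasing differentiable function ψ : [0,β̃) → ℝ with ψ(0) = ρ, ψ(t) ∈ [ρ,2π) and ψ'(t) = γ·G(ψ(t)) for all t ∈ [0,β̃), and ψ(t) → 2π as t → β̃⁻. (Thus β̃ is the supremum of the maximal interval of existence of the solution of z' = γG(z), z(0) = ρ, with values in [0,2π).) -/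
open Real Set Filter

/-- `G(u) = 2 + (u/2)(1 - cot(u/2))` for `u ≠ 0`, extended by `G(0) = 1`. -/
noncomputable def Gcot (u : ℝ) : ℝ :=
  if u = 0 then 1 else 2 + u / 2 * (1 - Real.cot (u / 2))

/-!
Since `x cos x ≤ sin x` on `[0, π]`, we have `x cot x = cos x / sinc x ≤ 1` for `|x| < π`, hence
`G(u) ≥ 1 + u / 2` on `(-2π, 2π)`; the same formula `G(u) = 2 + u/2 - cos(u/2) / sinc(u/2)`
shows that `G` is continuous there. The ODE `ψ' = f(ψ)` with `f = γ G > 0` is solved by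
separation of variables: `ψ` is the inverse of the time map `x ↦ ∫_ρ^x du / f(u)`, which is
strictly increasing, and since `1 / G ≤ 1` on `[ρ, 2π)` the time needed to reach `2π` is the
finite number `β = ∫_ρ^{2π} du / f(u)`.
-/

open Function MeasureTheory Topology

namespace Real

lemma mul_cos_le_sin {x : ℝ} (h0 : 0 ≤ x) (hπ : x ≤ π) : x * cos x ≤ sin x := by
  rcases lt_or_ge x (π / 2) with h | h
  · have hc : 0 < cos x := cos_pos_of_mem_Ioo ⟨by linarith [pi_pos], h⟩
    rw [← tan_mul_cos hc.ne']
    exact mul_le_mul_of_nonneg_right (le_tan h0 h) hc.le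
  · have hc : cos x ≤ 0 := cos_nonpos_of_pi_div_two_le_of_le h (by linarith [pi_pos])
    nlinarith [sin_nonneg_of_nonneg_of_le_pi h0 hπ]

lemma sinc_abs (x : ℝ) : sinc |x| = sinc x := by
  rcases abs_choice x with h | h <;> simp [h, sinc_neg]

lemma sinc_pos {x : ℝ} (hx : |x| < π) : 0 < sinc x := by
  rcases eq_or_ne x 0 with rfl | hx0
  · simp
  have habs : 0 < |x| := abs_pos.2 hx0
  rw [← sinc_abs, sinc_of_ne_zero habs.ne']
  exact div_pos (sin_pos_of_pos_of_lt_pi habs hx) habs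

lemma cos_le_sinc {x : ℝ} (hx : |x| ≤ π) : cos x ≤ sinc x := by
  rcases eq_or_ne x 0 with rfl | hx0
  · simp
  have habs : 0 < |x| := abs_pos.2 hx0
  rw [← sinc_abs, ← cos_abs, sinc_of_ne_zero habs.ne', le_div_iff₀ habs, mul_comm]
  exact mul_cos_le_sin habs.le hx

end Real

lemma Gcot_eq_sub_cos_div_sinc (u : ℝ) : Gcot u = 2 + u / 2 - cos (u / 2) / sinc (u / 2) := by
  rcases eq_or_ne u 0 with rfl | hu
  · norm_num [Gcot]
  rw [Gcot, if_neg hu, sinc_of_ne_zero (div_ne_zero hu two_ne_zero), cot_eq_cos_div_sin,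
    div_div_eq_mul_div]
  ring

lemma continuousOn_Gcot : ContinuousOn Gcot (Ioo (-(2 * π)) (2 * π)) := by
  have hsinc : ∀ u ∈ Ioo (-(2 * π)) (2 * π), sinc (u / 2) ≠ 0 := fun u hu =>
    (sinc_pos (by rw [abs_lt]; constructor <;> linarith [hu.1, hu.2])).ne'
  rw [show Gcot = fun u => 2 + u / 2 - cos (u / 2) / sinc (u / 2) from
    funext Gcot_eq_sub_cos_div_sinc]
  exact ContinuousOn.sub (by fun_prop)
    ((by fun_prop : ContinuousOn (fun u => cos (u / 2)) _).div
      (continuous_sinc.comp_continuousOn (by fun_prop)) hsinc)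

lemma one_add_half_le_Gcot {u : ℝ} (hu : |u| < 2 * π) : 1 + u / 2 ≤ Gcot u := by
  have hu2 : |u / 2| < π := by rw [abs_div, abs_two]; linarith
  have := div_le_one_of_le₀ (cos_le_sinc hu2.le) (sinc_pos hu2).le
  rw [Gcot_eq_sub_cos_div_sinc]
  linarith

lemma Gcot_pos {u : ℝ} (hu : u ∈ Ioo (-2) (2 * π)) : 0 < Gcot u := by
  have := one_add_half_le_Gcot (u := u) (abs_lt.2 ⟨by linarith [hu.1, pi_gt_three], hu.2⟩)
  linarith [hu.1]

lemma one_le_Gcot {u : ℝ} (hu : u ∈ Ico 0 (2 * π)) : 1 ≤ Gcot u := by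
  have := one_add_half_le_Gcot (u := u) (abs_lt.2 ⟨by linarith [hu.1, pi_pos], hu.2⟩)
  linarith [hu.1]

lemma intervalIntegrable_inv_Gcot {a : ℝ} (ha : 0 ≤ a) (ha2 : a ≤ 2 * π) :
    IntervalIntegrable (fun u => (Gcot u)⁻¹) volume a (2 * π) := by
  have hsub : Ioo a (2 * π) ⊆ Ico 0 (2 * π) := fun u hu => ⟨ha.trans hu.1.le, hu.2⟩
  have hcont : ContinuousOn (fun u => (Gcot u)⁻¹) (Ioo a (2 * π)) :=
    (continuousOn_Gcot.mono fun u hu => ⟨by linarith [(hsub hu).1, pi_pos], hu.2⟩).inv₀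
      fun u hu => (one_pos.trans_le (one_le_Gcot (hsub hu))).ne'
  rw [intervalIntegrable_iff_integrableOn_Ioo_of_le ha2]
  refine IntegrableOn.of_bound measure_Ioo_lt_top (hcont.aestronglyMeasurable measurableSet_Ioo) 1
    (ae_restrict_of_forall_mem measurableSet_Ioo fun u hu => ?_)
  have := one_le_Gcot (hsub hu)
  rw [norm_inv, Real.norm_of_nonneg (by linarith)]
  exact inv_le_one_of_one_le₀ this

section InverseOfStrictMono

variable {T : ℝ → ℝ} {a b : ℝ}

lemma invFunOn_Ioo_mem_and_apply (hab : a ≤ b) (hcont : ContinuousOn T (Icc a b)) {t : ℝ}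
    (ht : t ∈ Ioo (T a) (T b)) :
    invFunOn T (Ioo a b) t ∈ Ioo a b ∧ T (invFunOn T (Ioo a b) t) = t :=
  have hsurj : SurjOn T (Ioo a b) (Ioo (T a) (T b)) := intermediate_value_Ioo hab hcont
  ⟨hsurj.mapsTo_invFunOn ht, hsurj.rightInvOn_invFunOn ht⟩

lemma invFunOn_Ioo_apply_self (hmono : StrictMonoOn T (Icc a b)) {x : ℝ} (hx : x ∈ Ioo a b) :
    invFunOn T (Ioo a b) (T x) = x :=
  (hmono.injOn.mono Ioo_subset_Icc_self).leftInvOn_invFunOn hx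

lemma strictMonoOn_invFunOn_Ioo (hab : a ≤ b) (hmono : StrictMonoOn T (Icc a b))
    (hcont : ContinuousOn T (Icc a b)) :
    StrictMonoOn (invFunOn T (Ioo a b)) (Ioo (T a) (T b)) := by
  intro s hs t ht hst
  obtain ⟨hψs, hTs⟩ := invFunOn_Ioo_mem_and_apply hab hcont hs
  obtain ⟨hψt, hTt⟩ := invFunOn_Ioo_mem_and_apply hab hcont ht
  rw [← hmono.lt_iff_lt (Ioo_subset_Icc_self hψs) (Ioo_subset_Icc_self hψt), hTs, hTt]
  exact hst

lemma hasDerivAt_invFunOn_Ioo (hmono : StrictMonoOn T (Icc a b))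
    (hcont : ContinuousOn T (Icc a b)) {x T' : ℝ} (hx : x ∈ Ioo a b) (hT : HasDerivAt T T' x)
    (hT' : T' ≠ 0) : HasDerivAt (invFunOn T (Ioo a b)) T'⁻¹ (T x) := by
  have hab : a ≤ b := hx.1.le.trans hx.2.le
  have hinv := invFunOn_Ioo_apply_self hmono hx
  have hJ : Ioo (T a) (T b) ∈ 𝓝 (T x) := isOpen_Ioo.mem_nhds (hmono.mapsTo_Ioo hx)
  have himage : invFunOn T (Ioo a b) '' Ioo (T a) (T b) ∈ 𝓝 (invFunOn T (Ioo a b) (T x)) := by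
    rw [hinv]
    exact mem_of_superset (isOpen_Ioo.mem_nhds hx) fun y hy =>
      ⟨T y, hmono.mapsTo_Ioo hy, invFunOn_Ioo_apply_self hmono hy⟩
  refine HasDerivAt.of_local_left_inverse
    ((strictMonoOn_invFunOn_Ioo hab hmono hcont).continuousAt_of_image_mem_nhds hJ himage)
    (by rwa [hinv]) hT'
    (eventually_of_mem hJ fun t ht => (invFunOn_Ioo_mem_and_apply hab hcont ht).2)

lemma tendsto_invFunOn_Ioo_nhdsLT (hab : a < b) (hmono : StrictMonoOn T (Icc a b))
    (hcont : ContinuousOn T (Icc a b)) : Tendsto (invFunOn T (Ioo a b)) (𝓝[<] (T b)) (𝓝 b) := by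
  have hTab : T a < T b := hmono (left_mem_Icc.2 hab.le) (right_mem_Icc.2 hab.le) hab
  have hspec : ∀ᶠ t in 𝓝[<] T b,
      invFunOn T (Ioo a b) t ∈ Ioo a b ∧ T (invFunOn T (Ioo a b) t) = t :=
    eventually_of_mem (Ioo_mem_nhdsLT hTab) fun t ht => invFunOn_Ioo_mem_and_apply hab.le hcont ht
  refine tendsto_order.2 ⟨fun l hl => ?_, fun m hm => hspec.mono fun t ht => ht.1.2.trans hm⟩
  obtain ⟨c, hc, hcb⟩ := exists_between (max_lt hl hab)
  have hcab : c ∈ Ioo a b := ⟨(le_max_right l a).trans_lt hc, hcb⟩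
  filter_upwards [hspec, Ioo_mem_nhdsLT (hmono.mapsTo_Ioo hcab).2] with t ht htc
  rw [← ht.2] at htc
  exact (le_max_left l a).trans_lt <| hc.trans <|
    (hmono.lt_iff_lt (Ioo_subset_Icc_self hcab) (Ioo_subset_Icc_self ht.1)).1 htc.1

end InverseOfStrictMono

noncomputable def timeMap (f : ℝ → ℝ) (x₀ x : ℝ) : ℝ := ∫ u in x₀..x, (f u)⁻¹

section TimeMap

variable {f : ℝ → ℝ} {a b x₀ : ℝ}

lemma timeMap_self (f : ℝ → ℝ) (x₀ : ℝ) : timeMap f x₀ x₀ = 0 :=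
  intervalIntegral.integral_same

lemma continuousOn_timeMap (hx₀ : x₀ ∈ Icc a b)
    (hint : IntervalIntegrable (fun u => (f u)⁻¹) volume a b) :
    ContinuousOn (timeMap f x₀) (Icc a b) := by
  have hab : a ≤ b := hx₀.1.trans hx₀.2
  rw [← uIcc_of_le hab] at hx₀ ⊢
  exact intervalIntegral.continuousOn_primitive_interval' hint hx₀

lemma hasDerivAt_timeMap (hf : ContinuousOn f (Ioo a b)) (hne : ∀ x ∈ Ioo a b, f x ≠ 0)
    (hx₀ : x₀ ∈ Ioo a b) {x : ℝ} (hx : x ∈ Ioo a b) :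
    HasDerivAt (timeMap f x₀) (f x)⁻¹ x := by
  have hinv : ContinuousOn (fun u => (f u)⁻¹) (Ioo a b) := hf.inv₀ hne
  exact intervalIntegral.integral_hasDerivAt_right
    ((hinv.mono (ordConnected_Ioo.uIcc_subset hx₀ hx)).intervalIntegrable)
    (hinv.stronglyMeasurableAtFilter isOpen_Ioo x hx) (hinv.continuousAt (isOpen_Ioo.mem_nhds hx))

lemma strictMonoOn_timeMap (hf : ContinuousOn f (Ioo a b)) (hpos : ∀ x ∈ Ioo a b, 0 < f x)
    (hx₀ : x₀ ∈ Ioo a b) (hint : IntervalIntegrable (fun u => (f u)⁻¹) volume a b) :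
    StrictMonoOn (timeMap f x₀) (Icc a b) := by
  refine strictMonoOn_of_deriv_pos (convex_Icc a b)
    (continuousOn_timeMap (Ioo_subset_Icc_self hx₀) hint) fun x hx => ?_
  rw [interior_Icc] at hx
  rw [(hasDerivAt_timeMap hf (fun x hx => (hpos x hx).ne') hx₀ hx).deriv]
  exact inv_pos.2 (hpos x hx)

theorem exists_solution_tendsto_of_intervalIntegrable_inv
    (hf : ContinuousOn f (Ioo a b)) (hpos : ∀ x ∈ Ioo a b, 0 < f x) (hx₀ : x₀ ∈ Ioo a b)
    (hint : IntervalIntegrable (fun u => (f u)⁻¹) volume x₀ b) :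
    ∃ ψ : ℝ → ℝ, StrictMonoOn ψ (Ico 0 (timeMap f x₀ b)) ∧ ψ 0 = x₀ ∧
      (∀ t ∈ Ico 0 (timeMap f x₀ b), ψ t ∈ Ico x₀ b ∧ HasDerivAt ψ (f (ψ t)) t) ∧
      Tendsto ψ (𝓝[<] (timeMap f x₀ b)) (𝓝 b) := by
  obtain ⟨a', ha, hax₀⟩ := exists_between hx₀.1
  have hsub : Ioo a' b ⊆ Ioo a b := Ioo_subset_Ioo_left ha.le
  have hx₀' : x₀ ∈ Ioo a' b := ⟨hax₀, hx₀.2⟩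
  have hab : a' < b := hax₀.trans hx₀.2
  have hint' : IntervalIntegrable (fun u => (f u)⁻¹) volume a' b :=
    (ContinuousOn.intervalIntegrable_of_Icc hax₀.le <| (hf.inv₀ fun x hx => (hpos x hx).ne').mono
      (Icc_subset_Ioo ha hx₀.2)).trans hint
  have hcont := continuousOn_timeMap (Ioo_subset_Icc_self hx₀') hint'
  have hmono := strictMonoOn_timeMap (hf.mono hsub) (fun x hx => hpos x (hsub hx)) hx₀' hint'
  have hT₀ : timeMap f x₀ x₀ = 0 := timeMap_self f x₀
  have hIco : Ico 0 (timeMap f x₀ b) ⊆ Ioo (timeMap f x₀ a') (timeMap f x₀ b) :=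
    Ico_subset_Ioo_left (hT₀ ▸ hmono (left_mem_Icc.2 hab.le) (Ioo_subset_Icc_self hx₀') hax₀)
  refine ⟨invFunOn (timeMap f x₀) (Ioo a' b),
    (strictMonoOn_invFunOn_Ioo hab.le hmono hcont).mono hIco, ?_, fun t ht => ?_,
    tendsto_invFunOn_Ioo_nhdsLT hab hmono hcont⟩
  · rw [← hT₀]
    exact invFunOn_Ioo_apply_self hmono hx₀'
  obtain ⟨hmem, hTt⟩ := invFunOn_Ioo_mem_and_apply hab.le hcont (hIco ht)
  refine ⟨⟨?_, hmem.2⟩, ?_⟩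
  · rw [← hmono.le_iff_le (Ioo_subset_Icc_self hx₀') (Ioo_subset_Icc_self hmem), hT₀, hTt]
    exact ht.1
  · have := hasDerivAt_invFunOn_Ioo hmono hcont hmem
      (hasDerivAt_timeMap hf (fun x hx => (hpos x hx).ne') hx₀ (hsub hmem))
      (inv_ne_zero (hpos _ (hsub hmem)).ne')
    rwa [inv_inv, hTt] at this

end TimeMap

/-- for `0 ≤ ρ < 2π` and `γ > 0`, with
`β̃ = (1/γ)·∫_ρ^{2π} du/G(u)`: the function `G` is continuous and strictly positive on
`[0,2π)`, `1/G` is bounded there (so `β̃ < ∞`), and the solution `ψ` of the autonomous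
problem `ψ' = γ·G(ψ)`, `ψ(0) = ρ` exists on `[0,β̃)`, is strictly increasing, takes
values in `[ρ,2π)`, and tends to `2π` as `t → β̃⁻`. -/
theorem autonomous_solution_exists_blowup
    (ρ γ : ℝ) (hρ0 : 0 ≤ ρ) (hρ : ρ < 2 * π) (hγ : 0 < γ)
    (β : ℝ) (hβ : β = γ⁻¹ * ∫ u in ρ..(2 * π), (Gcot u)⁻¹) :
    ContinuousOn Gcot (Ico (0 : ℝ) (2 * π)) ∧
    (∀ u ∈ Ico (0 : ℝ) (2 * π), 0 < Gcot u) ∧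
    (∃ M : ℝ, ∀ u ∈ Ico (0 : ℝ) (2 * π), (Gcot u)⁻¹ ≤ M) ∧
    ∃ ψ : ℝ → ℝ,
      StrictMonoOn ψ (Ico (0 : ℝ) β) ∧
      ψ 0 = ρ ∧
      (∀ t ∈ Ico (0 : ℝ) β, ψ t ∈ Ico ρ (2 * π) ∧
        HasDerivWithinAt ψ (γ * Gcot (ψ t)) (Ico (0 : ℝ) β) t) ∧
      Tendsto ψ (nhdsWithin β (Iio β)) (nhds (2 * π)) := by
  have hIco : Ico 0 (2 * π) ⊆ Ioo (-(2 * π)) (2 * π) :=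
    Ico_subset_Ioo_left (neg_lt_zero.2 (by positivity))
  have hβT : β = timeMap (fun u => γ * Gcot u) ρ (2 * π) := by
    simp only [hβ, timeMap, mul_inv, intervalIntegral.integral_const_mul]
  obtain ⟨ψ, hmono, hψ₀, hsol, hlim⟩ := exists_solution_tendsto_of_intervalIntegrable_inv
    (f := fun u => γ * Gcot u) (a := -2) (b := 2 * π) (x₀ := ρ)
    ((continuousOn_Gcot.mono (Ioo_subset_Ioo_left (by linarith [pi_gt_three]))).const_smul γ)
    (fun u hu => mul_pos hγ (Gcot_pos hu)) ⟨by linarith, hρ⟩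
    (by simpa only [mul_inv] using (intervalIntegrable_inv_Gcot hρ0 hρ.le).const_mul γ⁻¹)
  rw [← hβT] at hmono hsol hlim
  refine ⟨continuousOn_Gcot.mono hIco, fun u hu => one_pos.trans_le (one_le_Gcot hu),
    ⟨1, fun u hu => inv_le_one_of_one_le₀ (one_le_Gcot hu)⟩, ψ, hmono, hψ₀,
    fun t ht => ⟨(hsol t ht).1, (hsol t ht).2.hasDerivWithinAt⟩, hlim⟩
end
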